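/- arXiv:1302.0221 — 11 statements merged into one kernel-verified Lean document; each statement's English description precedes it below -/
import Mathlib

section
/- Let A, P be n×n real matrices with P symmetric positive definite, and S a k×n real matrix. Then AᵀP + PA + SᵀS ≤ 0 if and only if the (n+k)×(n+k) block matrix [[P⁻¹Aᵀ + AP⁻¹, P⁻¹Sᵀ], [SP⁻¹, −I_k]] is negative semidefinite. -/
open Matrix

private lemma dot_symm {n : ℕ} (N : Matrix (Fin n) (Fin n) ℝ) (hN : Nᵀ = N)
    (u w : Fin n → ℝ) : u ⬝ᵥ (N *ᵥ w) = (N *ᵥ u) ⬝ᵥ w := by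
  rw [Matrix.dotProduct_mulVec, ← Matrix.mulVec_transpose, hN]

private lemma dot_trans {n k : ℕ} (S : Matrix (Fin k) (Fin n) ℝ)
    (u : Fin n → ℝ) (z : Fin k → ℝ) : u ⬝ᵥ (Sᵀ *ᵥ z) = (S *ᵥ u) ⬝ᵥ z := by
  rw [Matrix.dotProduct_mulVec, ← Matrix.mulVec_transpose, Matrix.transpose_transpose]

private lemma dot_self_nonneg {k : ℕ} (w : Fin k → ℝ) : 0 ≤ w ⬝ᵥ w := by
  exact Finset.sum_nonneg fun i _ => mul_self_nonneg _

/-- For P symmetric positive definite,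
`AᵀP + PA + SᵀS ≤ 0` iff the block matrix
`[[P⁻¹Aᵀ + AP⁻¹, P⁻¹Sᵀ], [SP⁻¹, −I_k]]` is negative semidefinite. -/
theorem stmt1 {n k : ℕ} (A P : Matrix (Fin n) (Fin n) ℝ)
    (S : Matrix (Fin k) (Fin n) ℝ) (hP : P.PosDef) :
    (∀ x : Fin n → ℝ, x ⬝ᵥ ((Aᵀ * P + P * A + Sᵀ * S) *ᵥ x) ≤ 0) ↔
    (∀ v : Fin n ⊕ Fin k → ℝ,
      v ⬝ᵥ ((Matrix.fromBlocks (P⁻¹ * Aᵀ + A * P⁻¹) (P⁻¹ * Sᵀ) (S * P⁻¹)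
        (-(1 : Matrix (Fin k) (Fin k) ℝ))) *ᵥ v) ≤ 0) := by
  have hdet : IsUnit P.det := isUnit_iff_ne_zero.mpr hP.det_pos.ne'
  have hPP : P * P⁻¹ = 1 := Matrix.mul_nonsing_inv P hdet
  have hPiP : P⁻¹ * P = 1 := Matrix.nonsing_inv_mul P hdet
  have hPt : Pᵀ = P := hP.isHermitian.eq
  have hPit : (P⁻¹)ᵀ = P⁻¹ := by rw [Matrix.transpose_nonsing_inv, hPt]
  -- key computation of the block quadratic form
  have key : ∀ (y : Fin n → ℝ) (z : Fin k → ℝ),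
      (y ⊕ᵥ z) ⬝ᵥ ((Matrix.fromBlocks (P⁻¹ * Aᵀ + A * P⁻¹) (P⁻¹ * Sᵀ) (S * P⁻¹)
        (-(1 : Matrix (Fin k) (Fin k) ℝ))) *ᵥ (y ⊕ᵥ z)) =
      (P⁻¹ *ᵥ y) ⬝ᵥ ((Aᵀ * P + P * A) *ᵥ (P⁻¹ *ᵥ y))
        + 2 * ((S *ᵥ (P⁻¹ *ᵥ y)) ⬝ᵥ z) - z ⬝ᵥ z := by
    intro y z
    set x := P⁻¹ *ᵥ y with hx
    have hPy : P *ᵥ x = y := by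
      rw [hx, Matrix.mulVec_mulVec, hPP, Matrix.one_mulVec]
    rw [Matrix.fromBlocks_mulVec, sumElim_dotProduct_sumElim]
    simp only [Sum.elim_comp_inl, Sum.elim_comp_inr, dotProduct_add,
      Matrix.add_mulVec, Matrix.neg_mulVec, Matrix.one_mulVec, dotProduct_neg,
      ← Matrix.mulVec_mulVec]
    have h1 : y ⬝ᵥ (P⁻¹ *ᵥ (Aᵀ *ᵥ y)) = x ⬝ᵥ (Aᵀ *ᵥ (P *ᵥ x)) := by
      rw [dot_symm P⁻¹ hPit, ← hx, hPy]
    have h2 : y ⬝ᵥ (A *ᵥ (P⁻¹ *ᵥ y)) = x ⬝ᵥ (P *ᵥ (A *ᵥ x)) := by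
      rw [dot_symm P hPt, hPy, ← hx]
    have h3 : y ⬝ᵥ (P⁻¹ *ᵥ (Sᵀ *ᵥ z)) = (S *ᵥ x) ⬝ᵥ z := by
      rw [dot_symm P⁻¹ hPit, ← hx, dot_trans]
    have h4 : z ⬝ᵥ (S *ᵥ (P⁻¹ *ᵥ y)) = (S *ᵥ x) ⬝ᵥ z := by
      rw [← hx, dotProduct_comm]
    rw [h1, h2, h3, h4]
    ring
  constructor
  · intro h v
    have hv : v = (v ∘ Sum.inl) ⊕ᵥ (v ∘ Sum.inr) := by
      funext i; cases i <;> rfl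
    rw [hv, key]
    set x := P⁻¹ *ᵥ (v ∘ Sum.inl) with hx
    set z := v ∘ Sum.inr with hz
    have hQ := h x
    have hS : x ⬝ᵥ ((Sᵀ * S) *ᵥ x) = (S *ᵥ x) ⬝ᵥ (S *ᵥ x) := by
      rw [← Matrix.mulVec_mulVec, dot_trans]
    rw [Matrix.add_mulVec, dotProduct_add, hS] at hQ
    have hsq : 0 ≤ (S *ᵥ x - z) ⬝ᵥ (S *ᵥ x - z) := dot_self_nonneg _
    have hexp : (S *ᵥ x - z) ⬝ᵥ (S *ᵥ x - z) =
        (S *ᵥ x) ⬝ᵥ (S *ᵥ x) - 2 * ((S *ᵥ x) ⬝ᵥ z) + z ⬝ᵥ z := by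
      rw [sub_dotProduct, dotProduct_sub, dotProduct_sub,
        dotProduct_comm z (S *ᵥ x)]
      ring
    rw [hexp] at hsq
    linarith
  · intro h x
    have := h ((P *ᵥ x) ⊕ᵥ (S *ᵥ x))
    rw [key] at this
    have hxx : P⁻¹ *ᵥ (P *ᵥ x) = x := by
      rw [Matrix.mulVec_mulVec, hPiP, Matrix.one_mulVec]
    rw [hxx] at this
    have hS : x ⬝ᵥ ((Sᵀ * S) *ᵥ x) = (S *ᵥ x) ⬝ᵥ (S *ᵥ x) := by
      rw [← Matrix.mulVec_mulVec, dot_trans]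
    rw [Matrix.add_mulVec, dotProduct_add, hS]
    linarith
end

section
/- Let A, P be n×n real matrices with P symmetric positive definite, and S a k×n real matrix. Then −P + AᵀPA + SᵀS ≤ 0 if and only if the symmetric block matrix [[−P⁻¹ + AP⁻¹Aᵀ, −AP⁻¹Sᵀ], [−SP⁻¹Aᵀ, −I_k + SP⁻¹Sᵀ]] is negative semidefinite. -/
/-!
With `R = diag(P, I_k)` and `M = [A; -S]`, the first condition reads `‖M x‖_R ≤ ‖x‖_P` and the
block condition reads `‖Mᵀ v‖_{P⁻¹} ≤ ‖v‖_{R⁻¹}`, where `‖x‖_Q² = xᵀ Q x`. These weighted norms are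
dual to each other, so both conditions say that `M`, respectively its adjoint, is a contraction.
-/

open Matrix

namespace Matrix

variable {m n : Type*} [Fintype m] [Fintype n]

lemma IsSymm.mulVec_dotProduct {R : Matrix m m ℝ} (hR : R.IsSymm) (x y : m → ℝ) :
    (R *ᵥ x) ⬝ᵥ y = x ⬝ᵥ R *ᵥ y := by
  rw [dotProduct_mulVec, ← mulVec_transpose, hR.eq]

def IsContraction (Q : Matrix n n ℝ) (R : Matrix m m ℝ) (M : Matrix m n ℝ) : Prop :=
  ∀ x, (M *ᵥ x) ⬝ᵥ R *ᵥ (M *ᵥ x) ≤ x ⬝ᵥ Q *ᵥ x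

lemma isContraction_iff_nonpos (Q : Matrix n n ℝ) (R : Matrix m m ℝ) (M : Matrix m n ℝ) :
    IsContraction Q R M ↔ ∀ x, x ⬝ᵥ (-Q + Mᵀ * R * M) *ᵥ x ≤ 0 := by
  refine forall_congr' fun x => ?_
  rw [add_mulVec, neg_mulVec, dotProduct_add, dotProduct_neg, ← mulVec_mulVec, ← mulVec_mulVec,
    dotProduct_mulVec x Mᵀ, vecMul_transpose, neg_add_nonpos_iff]

variable [DecidableEq m] [DecidableEq n]

open scoped ComplexOrder in
lemma PosDef.fromBlocks_zero_zero {𝕜 : Type*} [RCLike 𝕜] {A : Matrix m m 𝕜} {D : Matrix n n 𝕜}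
    (hA : A.PosDef) (hD : D.PosDef) : (fromBlocks A 0 0 D).PosDef := by
  have := hA.isUnit.invertible
  have hpsd : (fromBlocks A 0 0 D).PosSemidef := by
    simpa using (PosDef.fromBlocks₁₁ (0 : Matrix m n 𝕜) D hA).mpr (by simpa using hD.posSemidef)
  exact hpsd.posDef_iff_isUnit.mpr (isUnit_fromBlocks_zero₁₂.mpr ⟨hA.isUnit, hD.isUnit⟩)

/-- Weighted AM-GM, from `0 ≤ (a - R⁻¹ b)ᵀ R (a - R⁻¹ b)`. -/
lemma PosDef.two_mul_dotProduct_le {R : Matrix m m ℝ} (hR : R.PosDef) (a b : m → ℝ) :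
    2 * (a ⬝ᵥ b) ≤ a ⬝ᵥ R *ᵥ a + b ⬝ᵥ R⁻¹ *ᵥ b := by
  have hsymm : R.IsSymm := isHermitian_iff_isSymm.mp hR.isHermitian
  have hRRinv : R *ᵥ (R⁻¹ *ᵥ b) = b := by
    rw [mulVec_mulVec, mul_nonsing_inv R ((isUnit_iff_isUnit_det R).mp hR.isUnit), one_mulVec]
  have h := hR.posSemidef.dotProduct_mulVec_nonneg (a - R⁻¹ *ᵥ b)
  rw [star_trivial, mulVec_sub, hRRinv, dotProduct_sub, sub_dotProduct, sub_dotProduct,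
    ← hsymm.mulVec_dotProduct (R⁻¹ *ᵥ b), hRRinv, dotProduct_comm (R⁻¹ *ᵥ b) b,
    dotProduct_comm b a] at h
  linarith

/-- With `u = Mᵀ y` and `x = Q⁻¹ u`, both `xᵀ Q x` and `(M x) ⬝ y` equal `uᵀ Q⁻¹ u =: L`, so
weighted AM-GM applied to `(M x) ⬝ y` gives `2 L ≤ L + yᵀ R⁻¹ y`. -/
lemma IsContraction.transpose {Q : Matrix n n ℝ} {R : Matrix m m ℝ} {M : Matrix m n ℝ}
    (hQ : IsUnit Q) (hR : R.PosDef) (h : IsContraction Q R M) : IsContraction R⁻¹ Q⁻¹ Mᵀ := by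
  intro y
  set u := Mᵀ *ᵥ y
  set x := Q⁻¹ *ᵥ u
  have hQx : Q *ᵥ x = u := by
    rw [mulVec_mulVec, mul_nonsing_inv Q ((isUnit_iff_isUnit_det Q).mp hQ), one_mulVec]
  have hMx : (M *ᵥ x) ⬝ᵥ y = u ⬝ᵥ x := by
    rw [dotProduct_comm, dotProduct_mulVec, ← mulVec_transpose, dotProduct_comm]
  have hxQx : x ⬝ᵥ Q *ᵥ x = u ⬝ᵥ x := by rw [hQx, dotProduct_comm]
  have := hR.two_mul_dotProduct_le (M *ᵥ x) y
  have := h x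
  linarith

lemma isContraction_transpose_iff {Q : Matrix n n ℝ} {R : Matrix m m ℝ} {M : Matrix m n ℝ}
    (hQ : Q.PosDef) (hR : R.PosDef) : IsContraction R⁻¹ Q⁻¹ Mᵀ ↔ IsContraction Q R M := by
  refine ⟨fun h => ?_, IsContraction.transpose hQ.isUnit hR⟩
  have h' := h.transpose hR.inv.isUnit hQ.inv
  rwa [transpose_transpose, nonsing_inv_nonsing_inv Q ((isUnit_iff_isUnit_det Q).mp hQ.isUnit),
    nonsing_inv_nonsing_inv R ((isUnit_iff_isUnit_det R).mp hR.isUnit)] at h'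

end Matrix

/-- For P symmetric positive definite,
`−P + AᵀPA + SᵀS ≤ 0` iff the block matrix
`[[−P⁻¹ + AP⁻¹Aᵀ, −AP⁻¹Sᵀ], [−SP⁻¹Aᵀ, −I_k + SP⁻¹Sᵀ]]` is negative semidefinite. -/
theorem stmt2 {n k : ℕ} (A P : Matrix (Fin n) (Fin n) ℝ)
    (S : Matrix (Fin k) (Fin n) ℝ) (hP : P.PosDef) :
    (∀ x : Fin n → ℝ, x ⬝ᵥ ((-P + Aᵀ * P * A + Sᵀ * S) *ᵥ x) ≤ 0) ↔
    (∀ v : Fin n ⊕ Fin k → ℝ,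
      v ⬝ᵥ ((Matrix.fromBlocks (-P⁻¹ + A * P⁻¹ * Aᵀ) (-(A * P⁻¹ * Sᵀ))
        (-(S * P⁻¹ * Aᵀ)) (-(1 : Matrix (Fin k) (Fin k) ℝ) + S * P⁻¹ * Sᵀ)) *ᵥ v) ≤ 0) := by
  set R := fromBlocks P 0 0 (1 : Matrix (Fin k) (Fin k) ℝ)
  set M := fromRows A (-S)
  have hR : R.PosDef := hP.fromBlocks_zero_zero PosDef.one
  have hRinv : R⁻¹ = fromBlocks P⁻¹ 0 0 1 := by
    rw [inv_fromBlocks_zero₂₁_of_isUnit_iff _ _ _ (iff_of_true hP.isUnit isUnit_one)]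
    simp
  have hlhs : -P + Aᵀ * P * A + Sᵀ * S = -P + Mᵀ * R * M := by
    rw [transpose_fromRows, fromCols_mul_fromBlocks, fromCols_mul_fromRows]
    simp [add_assoc]
  have hrhs : fromBlocks (-P⁻¹ + A * P⁻¹ * Aᵀ) (-(A * P⁻¹ * Sᵀ)) (-(S * P⁻¹ * Aᵀ))
      (-1 + S * P⁻¹ * Sᵀ) = -R⁻¹ + Mᵀᵀ * P⁻¹ * Mᵀ := by
    rw [hRinv, transpose_transpose, fromRows_mul, transpose_fromRows, fromRows_mul_fromCols,
      fromBlocks_neg, fromBlocks_add]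
    simp
  rw [hlhs, hrhs, ← isContraction_iff_nonpos, ← isContraction_iff_nonpos,
    isContraction_transpose_iff hP hR]
end

section
/- Let Q be a finite set indexing n×n matrices A_q, and suppose P is symmetric positive definite with A_qᵀP + PA_q < 0 for all q in Q. Then there exists γ > 0 and a symmetric positive definite matrix 𝒬 such that A_qᵀ𝒬 + 𝒬A_q + C_qᵀC_q < 0 for all q in Q, where C_q are given p×n matrices. (Quadratic stability implies existence of an observability grammian, continuous time.) -/
/-!
On a finite-dimensional space a continuous 2-homogeneous function is bounded above by its
maximum on the unit sphere times `‖x‖²`. Hence `xᵀ(AᵀP + PA)x ≤ -m‖x‖²` with `m > 0` and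
`xᵀCᵀCx ≤ K‖x‖²`, so `c(AᵀP + PA) + CᵀC` is negative definite for every `c > K / m`. As `Q`
is finite, one such `c` serves every `q`, and `𝒬 = cP` works.
-/

open Matrix Filter Metric

theorem exists_forall_le_mul_norm_sq_of_homogeneous {E : Type*} [NormedAddCommGroup E]
    [NormedSpace ℝ E] [FiniteDimensional ℝ E] [Nontrivial E] {f : E → ℝ}
    (hf : Continuous f) (hhom : ∀ (r : ℝ) (x : E), f (r • x) = r ^ 2 * f x) :
    ∃ u : E, ‖u‖ = 1 ∧ ∀ x, f x ≤ f u * ‖x‖ ^ 2 := by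
  obtain ⟨u, hu, hmax⟩ := (isCompact_sphere (0 : E) 1).exists_isMaxOn
    (NormedSpace.sphere_nonempty.mpr zero_le_one) hf.continuousOn
  refine ⟨u, mem_sphere_zero_iff_norm.mp hu, fun x => ?_⟩
  rcases eq_or_ne x 0 with rfl | hx
  · simpa using (hhom 0 0).le
  have hx' : ‖x‖ ≠ 0 := norm_ne_zero_iff.mpr hx
  have hunit : ‖x‖⁻¹ • x ∈ sphere (0 : E) 1 := by
    rw [mem_sphere_zero_iff_norm, norm_smul, norm_inv, norm_norm, inv_mul_cancel₀ hx']
  calc f x = ‖x‖ ^ 2 * f (‖x‖⁻¹ • x) := by rw [← hhom, smul_inv_smul₀ hx']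
    _ ≤ ‖x‖ ^ 2 * f u := by gcongr; exact hmax hunit
    _ = f u * ‖x‖ ^ 2 := mul_comm _ _

theorem eventually_atTop_forall_mul_add_neg {E : Type*} [NormedAddCommGroup E]
    [NormedSpace ℝ E] [FiniteDimensional ℝ E] {f g : E → ℝ}
    (hf : Continuous f) (hfhom : ∀ (r : ℝ) (x : E), f (r • x) = r ^ 2 * f x)
    (hg : Continuous g) (hghom : ∀ (r : ℝ) (x : E), g (r • x) = r ^ 2 * g x)
    (hneg : ∀ x, x ≠ 0 → f x < 0) :
    ∀ᶠ c in atTop, ∀ x, x ≠ 0 → c * f x + g x < 0 := by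
  rcases subsingleton_or_nontrivial E with _ | _
  · exact .of_forall fun _ x hx => absurd (Subsingleton.elim x 0) hx
  obtain ⟨u, hu, hfu⟩ := exists_forall_le_mul_norm_sq_of_homogeneous hf hfhom
  obtain ⟨v, -, hgv⟩ := exists_forall_le_mul_norm_sq_of_homogeneous hg hghom
  have hu0 : f u < 0 := hneg u (norm_ne_zero_iff.mp (hu ▸ one_ne_zero))
  filter_upwards [eventually_gt_atTop 0, eventually_gt_atTop (g v / -f u)]
    with c hc hcgv x hx
  have hcu : c * f u + g v < 0 := by
    rw [div_lt_iff₀ (neg_pos.mpr hu0)] at hcgv; linarith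
  calc c * f x + g x ≤ c * (f u * ‖x‖ ^ 2) + g v * ‖x‖ ^ 2 := by
        gcongr
        · exact hfu x
        · exact hgv x
    _ = (c * f u + g v) * ‖x‖ ^ 2 := by ring
    _ < 0 := mul_neg_of_neg_of_pos hcu (by positivity)

theorem Matrix.continuous_dotProduct_mulVec {m : Type*} [Fintype m] (M : Matrix m m ℝ) :
    Continuous fun x : m → ℝ => x ⬝ᵥ (M *ᵥ x) := by
  simp only [dotProduct, mulVec]
  fun_prop

theorem Matrix.smul_dotProduct_mulVec_smul {m : Type*} [Fintype m] (M : Matrix m m ℝ) (r : ℝ)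
    (x : m → ℝ) : (r • x) ⬝ᵥ (M *ᵥ (r • x)) = r ^ 2 * (x ⬝ᵥ (M *ᵥ x)) := by
  rw [mulVec_smul, smul_dotProduct, dotProduct_smul, smul_eq_mul, smul_eq_mul]
  ring

theorem Matrix.dotProduct_smul_add_mulVec {m : Type*} [Fintype m] (S T : Matrix m m ℝ) (c : ℝ)
    (x : m → ℝ) : x ⬝ᵥ ((c • S + T) *ᵥ x) = c * (x ⬝ᵥ (S *ᵥ x)) + x ⬝ᵥ (T *ᵥ x) := by
  rw [add_mulVec, smul_mulVec, dotProduct_add, dotProduct_smul, smul_eq_mul]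

theorem Matrix.eventually_atTop_negDef_smul_add {m : Type*} [Fintype m] {S : Matrix m m ℝ}
    (hS : ∀ x : m → ℝ, x ≠ 0 → x ⬝ᵥ (S *ᵥ x) < 0) (T : Matrix m m ℝ) :
    ∀ᶠ c : ℝ in atTop, ∀ x : m → ℝ, x ≠ 0 → x ⬝ᵥ ((c • S + T) *ᵥ x) < 0 := by
  simp only [dotProduct_smul_add_mulVec]
  exact eventually_atTop_forall_mul_add_neg (continuous_dotProduct_mulVec S)
    (smul_dotProduct_mulVec_smul S) (continuous_dotProduct_mulVec T)
    (smul_dotProduct_mulVec_smul T) hS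

/-- Quadratic stability implies existence of an observability
grammian (continuous time): if `A_qᵀP + PA_q < 0` for all `q` in a finite set,
with `P` symmetric positive definite, then there are `γ > 0` and a symmetric
positive definite `𝒬` with `A_qᵀ𝒬 + 𝒬A_q + C_qᵀC_q < 0` for all `q`. -/
theorem stmt5 {n p : ℕ} {Q : Type*} [Fintype Q]
    (A : Q → Matrix (Fin n) (Fin n) ℝ) (C : Q → Matrix (Fin p) (Fin n) ℝ)
    (P : Matrix (Fin n) (Fin n) ℝ) (hP : P.PosDef)
    (hstab : ∀ q : Q, ∀ x : Fin n → ℝ, x ≠ 0 →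
      x ⬝ᵥ (((A q)ᵀ * P + P * A q) *ᵥ x) < 0) :
    ∃ γ : ℝ, 0 < γ ∧ ∃ 𝒬 : Matrix (Fin n) (Fin n) ℝ, 𝒬.PosDef ∧
      ∀ q : Q, ∀ x : Fin n → ℝ, x ≠ 0 →
        x ⬝ᵥ (((A q)ᵀ * 𝒬 + 𝒬 * A q + (C q)ᵀ * C q) *ᵥ x) < 0 := by
  have hlyap (c : ℝ) (q : Q) : (A q)ᵀ * (c • P) + (c • P) * A q + (C q)ᵀ * C q
      = c • ((A q)ᵀ * P + P * A q) + (C q)ᵀ * C q := by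
    rw [Matrix.mul_smul, Matrix.smul_mul, smul_add]
  have hall : ∀ᶠ c : ℝ in atTop, ∀ q, ∀ x : Fin n → ℝ, x ≠ 0 →
      x ⬝ᵥ (((A q)ᵀ * (c • P) + (c • P) * A q + (C q)ᵀ * C q) *ᵥ x) < 0 := by
    simp only [hlyap]
    exact eventually_all.mpr fun q =>
      eventually_atTop_negDef_smul_add (hstab q) _
  obtain ⟨c, hc, hcpos⟩ := (hall.and (eventually_gt_atTop 0)).exists
  exact ⟨c, hcpos, c • P, hP.smul hcpos, hc⟩
end

section
/- Let Q be a finite set with matrices A_q (n×n), and let P be symmetric positive definite with P − A_qᵀPA_q positive definite for all q ∈ Q. Then for any family of positive semidefinite matrices M_q, q ∈ Q, there exists a symmetric positive definite matrix 𝒮 with A_qᵀ𝒮A_q + M_q − 𝒮 negative definite for all q ∈ Q. -/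
open Matrix

/-! Since `(A q)ᵀ (C P) (A q) + M q - C P = M q - C (P - (A q)ᵀ P (A q))`, it suffices to scale `P`
by a constant `C` for which `C (P - (A q)ᵀ P (A q))` dominates `M q` for every `q`. For one `q`
such a constant exists because a positive definite form is bounded below on the unit sphere; for
finitely many, take the largest. -/

/-- Two continuous functions that are homogeneous of degree two compare on all of `E` as they
compare on the unit sphere, where `f / g` is bounded by compactness. -/
theorem exists_pos_lt_mul_of_sq_homogeneous {E : Type*} [NormedAddCommGroup E]
    [NormedSpace ℝ E] [ProperSpace E] {f g : E → ℝ} (hf : Continuous f) (hg : Continuous g)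
    (hf_smul : ∀ (a : ℝ) x, f (a • x) = a ^ 2 * f x)
    (hg_smul : ∀ (a : ℝ) x, g (a • x) = a ^ 2 * g x) (hg_pos : ∀ x ≠ 0, 0 < g x) :
    ∃ c > 0, ∀ x ≠ 0, f x < c * g x := by
  have hg_sphere : ∀ u ∈ Metric.sphere (0 : E) 1, 0 < g u := fun u hu =>
    hg_pos u (ne_zero_of_mem_unit_sphere ⟨u, hu⟩)
  obtain ⟨K, hK⟩ := (isCompact_sphere (0 : E) 1).bddAbove_image
    (hf.continuousOn.div hg.continuousOn fun u hu => (hg_sphere u hu).ne')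
  refine ⟨max K 0 + 1, by positivity, fun x hx => ?_⟩
  have hx_norm : ‖x‖ ≠ 0 := norm_ne_zero_iff.2 hx
  set u := ‖x‖⁻¹ • x
  have hu : u ∈ Metric.sphere (0 : E) 1 := by
    simp [u, norm_smul, inv_mul_cancel₀ hx_norm]
  have hx_eq : x = ‖x‖ • u := by simp [u, smul_smul, mul_inv_cancel₀ hx_norm]
  have hgu := hg_sphere u hu
  have hfu : f u < (max K 0 + 1) * g u := by
    have hratio : f u / g u ≤ K := hK ⟨u, hu, rfl⟩
    rw [div_le_iff₀ hgu] at hratio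
    nlinarith [le_max_left K 0, le_max_right K 0]
  rw [hx_eq, hf_smul, hg_smul, mul_left_comm]
  exact mul_lt_mul_of_pos_left hfu (by positivity)

theorem dotProduct_mulVec_smul_self {ι : Type*} [Fintype ι] (M : Matrix ι ι ℝ) (a : ℝ)
    (x : ι → ℝ) : (a • x) ⬝ᵥ (M *ᵥ (a • x)) = a ^ 2 * (x ⬝ᵥ (M *ᵥ x)) := by
  rw [mulVec_smul, smul_dotProduct, dotProduct_smul, smul_eq_mul, smul_eq_mul]
  ring

theorem exists_pos_dotProduct_mulVec_lt_mul {ι : Type*} [Fintype ι] (M : Matrix ι ι ℝ)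
    {B : Matrix ι ι ℝ} (hB : B.PosDef) :
    ∃ c > 0, ∀ x ≠ 0, x ⬝ᵥ (M *ᵥ x) < c * (x ⬝ᵥ (B *ᵥ x)) :=
  exists_pos_lt_mul_of_sq_homogeneous (by fun_prop) (by fun_prop)
    (dotProduct_mulVec_smul_self M) (dotProduct_mulVec_smul_self B)
    fun _ hx => by simpa using hB.dotProduct_mulVec_pos hx

theorem dotProduct_mulVec_lyapunov_smul {ι : Type*} [Fintype ι] (A P M : Matrix ι ι ℝ) (C : ℝ)
    (x : ι → ℝ) :
    x ⬝ᵥ ((Aᵀ * (C • P) * A + M - C • P) *ᵥ x)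
      = x ⬝ᵥ (M *ᵥ x) - C * (x ⬝ᵥ ((P - Aᵀ * P * A) *ᵥ x)) := by
  have hmat : Aᵀ * (C • P) * A + M - C • P = M - C • (P - Aᵀ * P * A) := by
    rw [Matrix.mul_smul, Matrix.smul_mul, smul_sub]
    abel
  rw [hmat, sub_mulVec, smul_mulVec, dotProduct_sub, dotProduct_smul, smul_eq_mul]

theorem stmt6_general {n : ℕ} {Q : Type*} [Fintype Q]
    (A : Q → Matrix (Fin n) (Fin n) ℝ) (P : Matrix (Fin n) (Fin n) ℝ)
    (hP : P.PosDef)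
    (hstab : ∀ q : Q, (P - (A q)ᵀ * P * A q).PosDef)
    (M : Q → Matrix (Fin n) (Fin n) ℝ) :
    ∃ 𝒮 : Matrix (Fin n) (Fin n) ℝ, 𝒮.PosDef ∧
      ∀ q : Q, ∀ x : Fin n → ℝ, x ≠ 0 →
        x ⬝ᵥ (((A q)ᵀ * 𝒮 * A q + M q - 𝒮) *ᵥ x) < 0 := by
  choose c hc_pos hc using fun q => exists_pos_dotProduct_mulVec_lt_mul (M q) (hstab q)
  obtain ⟨C₀, hC₀⟩ := Finite.exists_le c
  set C := max C₀ 1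
  refine ⟨C • P, hP.smul (by positivity), fun q x hx => ?_⟩
  have hstab_x : 0 < x ⬝ᵥ ((P - (A q)ᵀ * P * A q) *ᵥ x) := by
    simpa using (hstab q).dotProduct_mulVec_pos hx
  have hcC : c q ≤ C := (hC₀ q).trans (le_max_left _ _)
  rw [dotProduct_mulVec_lyapunov_smul, sub_neg]
  calc x ⬝ᵥ (M q *ᵥ x) < c q * (x ⬝ᵥ ((P - (A q)ᵀ * P * A q) *ᵥ x)) := hc q x hx
    _ ≤ C * (x ⬝ᵥ ((P - (A q)ᵀ * P * A q) *ᵥ x)) := by gcongr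

/-- If `P − A_qᵀPA_q > 0` for all `q` (P symmetric positive
definite), then for any family of positive semidefinite matrices `M_q` there is
a symmetric positive definite `𝒮` with `A_qᵀ𝒮A_q + M_q − 𝒮 < 0` for all `q`. -/
theorem stmt6 {n : ℕ} {Q : Type*} [Fintype Q]
    (A : Q → Matrix (Fin n) (Fin n) ℝ) (P : Matrix (Fin n) (Fin n) ℝ)
    (hP : P.PosDef)
    (hstab : ∀ q : Q, (P - (A q)ᵀ * P * A q).PosDef)
    (M : Q → Matrix (Fin n) (Fin n) ℝ) (hM : ∀ q, (M q).PosSemidef) :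
    ∃ 𝒮 : Matrix (Fin n) (Fin n) ℝ, 𝒮.PosDef ∧
      ∀ q : Q, ∀ x : Fin n → ℝ, x ≠ 0 →
        x ⬝ᵥ (((A q)ᵀ * 𝒮 * A q + M q - 𝒮) *ᵥ x) < 0 :=
  stmt6_general A P hP hstab M
end

section
/- For discrete-time: let Q be a finite set with matrices A_q (n×n), B_q (n×m), and let 𝒫 be symmetric positive definite with A_q𝒫A_qᵀ + B_qB_qᵀ − 𝒫 ≤ 0 for all q ∈ Q. Then for every input sequence u : ℕ → ℝᵐ and switching sequence q : ℕ → Q, the trajectory x(t+1) = A_{q(t)}x(t) + B_{q(t)}u(t), x(0) = 0, satisfies x(T)ᵀ𝒫⁻¹x(T) ≤ Σ_{t=0}^{T−1} ‖u(t)‖₂² for every T ∈ ℕ. -/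
/-!
`V(x) = xᵀ𝒫⁻¹x` is a storage function: writing `w = 𝒫⁻¹x(t+1)`, one has
`V(x(t+1)) = 2 wᵀx(t+1) − wᵀ𝒫w`, and the two cross terms `2 wᵀA x` and `2 wᵀB u` are bounded by
completing the square against `𝒫` and against `1`. This gives
`V(x(t+1)) ≤ wᵀ(A𝒫Aᵀ + BBᵀ − 𝒫)w + V(x(t)) + ‖u(t)‖² ≤ V(x(t)) + ‖u(t)‖²`,
and summing from `V(x(0)) = 0` yields the bound.
-/

open Matrix

section

variable {ι κ : Type*} [Fintype ι] [Fintype κ]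

lemma two_mul_dotProduct_mulVec_le [DecidableEq κ] {P : Matrix κ κ ℝ} (hP : P.PosDef)
    (M : Matrix ι κ ℝ) (w : ι → ℝ) (z : κ → ℝ) :
    2 * (w ⬝ᵥ (M *ᵥ z)) ≤ w ⬝ᵥ ((M * P * Mᵀ) *ᵥ w) + z ⬝ᵥ (P⁻¹ *ᵥ z) := by
  have hdet : IsUnit P.det := hP.isUnit.map detMonoidHom
  have hPinv : (P⁻¹)ᵀ = P⁻¹ := by
    rw [transpose_nonsing_inv, (isHermitian_iff_isSymm.mp hP.isHermitian).eq]
  set a := Mᵀ *ᵥ w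
  have hcross : w ⬝ᵥ (M *ᵥ z) = a ⬝ᵥ z := by rw [dotProduct_mulVec, ← mulVec_transpose]
  have hquad : w ⬝ᵥ ((M * P * Mᵀ) *ᵥ w) = a ⬝ᵥ (P *ᵥ a) := by
    rw [← mulVec_mulVec, ← mulVec_mulVec, dotProduct_mulVec, ← mulVec_transpose]
  have hPPinv : P *ᵥ (P⁻¹ *ᵥ z) = z := by
    rw [mulVec_mulVec, mul_nonsing_inv _ hdet, one_mulVec]
  have hsymm : (P⁻¹ *ᵥ z) ⬝ᵥ (P *ᵥ a) = a ⬝ᵥ z := by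
    rw [dotProduct_comm, dotProduct_mulVec, ← mulVec_transpose, hPinv, mulVec_mulVec,
      nonsing_inv_mul _ hdet, one_mulVec]
  have hnonneg : 0 ≤ (a - P⁻¹ *ᵥ z) ⬝ᵥ (P *ᵥ (a - P⁻¹ *ᵥ z)) := by
    simpa using hP.posSemidef.dotProduct_mulVec_nonneg (a - P⁻¹ *ᵥ z)
  rw [mulVec_sub, hPPinv, sub_dotProduct, dotProduct_sub, dotProduct_sub, hsymm,
    dotProduct_comm (P⁻¹ *ᵥ z) z] at hnonneg
  rw [hcross, hquad]
  linarith

lemma dissipation_step_le [DecidableEq ι] [DecidableEq κ] {P : Matrix ι ι ℝ} (hP : P.PosDef)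
    {A : Matrix ι ι ℝ} {B : Matrix ι κ ℝ}
    (hgram : ∀ v, v ⬝ᵥ ((A * P * Aᵀ + B * Bᵀ - P) *ᵥ v) ≤ 0) (x : ι → ℝ) (u : κ → ℝ) :
    (A *ᵥ x + B *ᵥ u) ⬝ᵥ (P⁻¹ *ᵥ (A *ᵥ x + B *ᵥ u)) ≤ x ⬝ᵥ (P⁻¹ *ᵥ x) + u ⬝ᵥ u := by
  set y := A *ᵥ x + B *ᵥ u
  set w := P⁻¹ *ᵥ y
  have hPw : P *ᵥ w = y := by
    rw [mulVec_mulVec, mul_nonsing_inv _ (hP.isUnit.map detMonoidHom), one_mulVec]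
  have hA := two_mul_dotProduct_mulVec_le hP A w x
  have hB := two_mul_dotProduct_mulVec_le PosDef.one B w u
  simp only [Matrix.mul_one, inv_one, one_mulVec] at hB
  have hg := hgram w
  rw [sub_mulVec, add_mulVec, dotProduct_sub, dotProduct_add] at hg
  calc y ⬝ᵥ w = 2 * (w ⬝ᵥ (A *ᵥ x) + w ⬝ᵥ (B *ᵥ u)) - w ⬝ᵥ (P *ᵥ w) := by
        rw [hPw, ← dotProduct_add, dotProduct_comm w y]; ring
    _ ≤ x ⬝ᵥ (P⁻¹ *ᵥ x) + u ⬝ᵥ u := by linarith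
end

theorem stmt9_general {n m : ℕ} {Q : Type*}
    (A : Q → Matrix (Fin n) (Fin n) ℝ) (B : Q → Matrix (Fin n) (Fin m) ℝ)
    (Pg : Matrix (Fin n) (Fin n) ℝ) (hPg : Pg.PosDef)
    (hgram : ∀ q : Q, ∀ v : Fin n → ℝ,
      v ⬝ᵥ ((A q * Pg * (A q)ᵀ + B q * (B q)ᵀ - Pg) *ᵥ v) ≤ 0)
    (u : ℕ → Fin m → ℝ) (q : ℕ → Q) (x : ℕ → Fin n → ℝ)
    (hx0 : x 0 = 0)
    (hx : ∀ t : ℕ, x (t + 1) = (A (q t)) *ᵥ (x t) + (B (q t)) *ᵥ (u t))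
    (T : ℕ) :
    x T ⬝ᵥ (Pg⁻¹ *ᵥ (x T)) ≤ ∑ t ∈ Finset.range T, ∑ i, (u t i) ^ 2 := by
  induction T with
  | zero => simp [hx0]
  | succ T ih =>
    have hstep := dissipation_step_le hPg (hgram (q T)) (x T) (u T)
    have hu : u T ⬝ᵥ u T = ∑ i, u T i ^ 2 := by simp only [dotProduct, sq]
    rw [← hx, hu] at hstep
    rw [Finset.sum_range_succ]
    linarith

/-- discrete time: if `Pg ≻ 0` is symmetric and
`A_qPgA_qᵀ + B_qB_qᵀ − Pg ≤ 0` for all `q`, then along any switched trajectory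
`x(t+1) = A_{q(t)}x(t) + B_{q(t)}u(t)`, `x(0) = 0`, one has
`x(T)ᵀPg⁻¹x(T) ≤ Σ_{t=0}^{T−1} ‖u(t)‖₂²`. -/
theorem stmt9 {n m : ℕ} {Q : Type*} [Fintype Q]
    (A : Q → Matrix (Fin n) (Fin n) ℝ) (B : Q → Matrix (Fin n) (Fin m) ℝ)
    (Pg : Matrix (Fin n) (Fin n) ℝ) (hPg : Pg.PosDef)
    (hgram : ∀ q : Q, ∀ v : Fin n → ℝ,
      v ⬝ᵥ ((A q * Pg * (A q)ᵀ + B q * (B q)ᵀ - Pg) *ᵥ v) ≤ 0)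
    (u : ℕ → Fin m → ℝ) (q : ℕ → Q) (x : ℕ → Fin n → ℝ)
    (hx0 : x 0 = 0)
    (hx : ∀ t : ℕ, x (t + 1) = (A (q t)) *ᵥ (x t) + (B (q t)) *ᵥ (u t))
    (T : ℕ) :
    x T ⬝ᵥ (Pg⁻¹ *ᵥ (x T)) ≤ ∑ t ∈ Finset.range T, ∑ i, (u t i) ^ 2 :=
  stmt9_general A B Pg hPg hgram u q x hx0 hx T
end

section
/- Letained {A_q}_{q∈Q} be a finite family of n×n real matrices and suppose there exists a symmetric positive definite P with P − Σ_{q∈Q} A_qᵀPA_q positive definite. Then for every symmetric positive semidefinite G, the equation P' = Σ_{q∈Q} A_qᵀP'A_q + G has a unique solution, it is positive semidefinite, and equals Σ over all finite words w ∈ Q* of A_wᵀ G A_w, where A_w = A_{w_k}···A_{w_1} for w = w_1···w_k and A_ε = I. Moreover if G is positive definite then so is the solution. -/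
/-!
Write `T X = ∑_q A_qᵀ X A_q`. In the Loewner order `T` is monotone and the hypothesis gives
`T P ≤ ρ P` for some `ρ < 1`, hence `T^k X ≤ c ρ^k P` whenever `X ≤ c P`. The words of length `k`
contribute exactly `T^k G` to the series, so its traces are dominated by a geometric series; its
sum `S` is positive semidefinite and satisfies `S = T S + G`.

For uniqueness, a difference `D` of two solutions is fixed by `T`. The matrix `D` need not be
symmetric, so it is controlled through the bilinear bound `2 uᵀ D v ≤ uᵀ X u + vᵀ X v`: this holds
for `X = 1 + DᵀD`, is preserved by `T`, and therefore holds for `X = c ρ^k P` and every `k`.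
-/

open Matrix

/-- For a word `w = w₁⋯w_k` (a list), `wordProd A w = A_{w_k} ⋯ A_{w_1}`,
with the empty word mapping to the identity. -/
def wordProd {n : ℕ} {Q : Type*} (A : Q → Matrix (Fin n) (Fin n) ℝ)
    (w : List Q) : Matrix (Fin n) (Fin n) ℝ :=
  w.foldl (fun M q => A q * M) 1

section

open scoped MatrixOrder

variable {m Q : Type*} [Fintype m]

lemma Matrix.IsHermitian.exists_le_smul_of_posDef [DecidableEq m] {N M : Matrix m m ℝ}
    (hN : N.IsHermitian) (hM : M.PosDef) : ∃ c : ℝ, 0 < c ∧ N ≤ c • M := by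
  cases isEmpty_or_nonempty m
  · exact ⟨1, one_pos, (Subsingleton.elim _ _).le⟩
  obtain ⟨r, hr, hrM⟩ := (CFC.exists_pos_algebraMap_le_iff hM.isHermitian.isSelfAdjoint).mpr
    fun _ hx => hM.isStrictlyPositive.spectrum_pos hx
  obtain ⟨s, hs⟩ := (ContinuousFunctionalCalculus.isCompact_spectrum (R := ℝ) N).bddAbove
  have hNs : N ≤ algebraMap ℝ _ (max s 1) :=
    le_algebraMap_of_spectrum_le (fun _ hx => (hs hx).trans (le_max_left _ _)) hN.isSelfAdjoint
  refine ⟨max s 1 / r, by positivity, ?_⟩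
  calc N ≤ algebraMap ℝ _ (max s 1) := hNs
    _ = (max s 1 / r) • algebraMap ℝ _ r := by
        rw [Algebra.algebraMap_eq_smul_one, Algebra.algebraMap_eq_smul_one, smul_smul,
          div_mul_cancel₀ _ hr.ne']
    _ ≤ (max s 1 / r) • M := smul_le_smul_of_nonneg_left hrM (by positivity)

lemma Matrix.transpose_mul_mul_le_transpose_mul_mul {X Y : Matrix m m ℝ} (h : X ≤ Y)
    (B : Matrix m m ℝ) : Bᵀ * X * B ≤ Bᵀ * Y * B := by
  simpa [star_eq_conjTranspose] using star_left_conjugate_le_conjugate h B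

lemma Matrix.PosSemidef.abs_apply_le_trace {X : Matrix m m ℝ} (hX : X.PosSemidef) (i j : m) :
    |X i j| ≤ X.trace := by
  classical
  have hdiag (k : m) : X k k ≤ X.trace :=
    Finset.single_le_sum (f := fun l => X l l) (fun _ _ => hX.diag_nonneg) (Finset.mem_univ k)
  have hsymm : X j i = X i j := by simpa using hX.isHermitian.apply i j
  have hplus := hX.dotProduct_mulVec_nonneg (Pi.single i 1 + Pi.single j 1)
  have hminus := hX.dotProduct_mulVec_nonneg (Pi.single i 1 - Pi.single j 1)
  simp only [star_trivial, mulVec_add, mulVec_sub, mulVec_single_one, dotProduct_add,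
    dotProduct_sub, add_dotProduct, sub_dotProduct, single_one_dotProduct, col_apply,
    hsymm] at hplus hminus
  rw [abs_le]
  constructor <;> linarith [hdiag i, hdiag j]

lemma Matrix.summable_of_posSemidef_of_summable_trace {ι : Type*} {f : ι → Matrix m m ℝ}
    (hf : ∀ i, (f i).PosSemidef) (htrace : Summable fun i => (f i).trace) : Summable f :=
  Pi.summable.mpr fun i => Pi.summable.mpr fun j =>
    htrace.of_norm_bounded fun w => (hf w).abs_apply_le_trace i j

lemma Matrix.PosSemidef.of_hasSum {ι : Type*} {f : ι → Matrix m m ℝ} {S : Matrix m m ℝ}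
    (hf : ∀ i, (f i).PosSemidef) (h : HasSum f S) : S.PosSemidef := by
  refine .of_dotProduct_mulVec_nonneg ?_ fun x => ?_
  · have hH : HasSum f Sᴴ := by simpa only [(hf _).isHermitian.eq] using h.matrix_conjTranspose
    exact hH.unique h
  · have hquad : HasSum (fun i => x ⬝ᵥ f i *ᵥ x) (x ⬝ᵥ S *ᵥ x) :=
      h.map ((AddMonoidHom.mk' (x ⬝ᵥ ·) (dotProduct_add x)).comp (mulVec.addMonoidHomLeft x))
        (continuous_const.dotProduct (continuous_id.matrix_mulVec continuous_const))
    simpa using hquad.nonneg fun i => by simpa using (hf i).dotProduct_mulVec_nonneg x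

lemma Module.End.apply_add_eq_of_hasSum_pow {E : Type*} [AddCommGroup E] [Module ℝ E]
    [TopologicalSpace E] [IsTopologicalAddGroup E] [T2Space E] (L : Module.End ℝ E)
    (hL : Continuous L) {x s : E} (h : HasSum (fun k => (L ^ k) x) s) : L s + x = s := by
  have hshift : HasSum (fun k => L ((L ^ k) x)) (s - x) := by
    simpa [pow_succ', Module.End.mul_apply] using (hasSum_nat_add_iff' 1).mpr h
  rw [(h.map L hL).unique hshift, sub_add_cancel]

def lyapunovMap [Fintype Q] (A : Q → Matrix m m ℝ) : Module.End ℝ (Matrix m m ℝ) where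
  toFun X := ∑ q, (A q)ᵀ * X * A q
  map_add' X Y := by simp only [mul_add, add_mul, Finset.sum_add_distrib]
  map_smul' c X := by
    simp only [mul_smul_comm, smul_mul_assoc, Finset.smul_sum, RingHom.id_apply]

def BilinDominated (M X : Matrix m m ℝ) : Prop :=
  ∀ u v : m → ℝ, 2 * (u ⬝ᵥ M *ᵥ v) ≤ u ⬝ᵥ X *ᵥ u + v ⬝ᵥ X *ᵥ v

section lyapunovMap

variable [Fintype Q] (A : Q → Matrix m m ℝ)

lemma lyapunovMap_apply (X : Matrix m m ℝ) : lyapunovMap A X = ∑ q, (A q)ᵀ * X * A q := rfl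

lemma lyapunovMap_mono : Monotone (lyapunovMap A) := fun _ _ h =>
  Finset.sum_le_sum fun q _ => transpose_mul_mul_le_transpose_mul_mul h (A q)

lemma lyapunovMap_posSemidef {X : Matrix m m ℝ} (hX : X.PosSemidef) :
    (lyapunovMap A X).PosSemidef := by
  have := lyapunovMap_mono A hX.nonneg
  rw [map_zero] at this
  exact this.posSemidef

lemma lyapunovMap_pow_mono (k : ℕ) : Monotone (lyapunovMap A ^ k) := by
  rw [Module.End.coe_pow]
  exact (lyapunovMap_mono A).iterate k

lemma exists_lyapunovMap_le_smul [DecidableEq m] {P : Matrix m m ℝ} (hP : P.PosDef)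
    (hstab : (P - lyapunovMap A P).PosDef) :
    ∃ ρ : ℝ, 0 ≤ ρ ∧ ρ < 1 ∧ lyapunovMap A P ≤ ρ • P := by
  obtain ⟨c, hc, hPc⟩ := hP.isHermitian.exists_le_smul_of_posDef hstab
  have hc' : c⁻¹ • P ≤ P - lyapunovMap A P := by
    simpa [smul_smul, inv_mul_cancel₀ hc.ne'] using
      smul_le_smul_of_nonneg_left hPc (inv_nonneg.mpr hc.le)
  refine ⟨max (1 - c⁻¹) 0, le_max_right _ _, max_lt (by simpa using hc) one_pos, ?_⟩
  calc lyapunovMap A P ≤ (1 - c⁻¹) • P := by rwa [sub_smul, one_smul, le_sub_comm]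
    _ ≤ max (1 - c⁻¹) 0 • P :=
        smul_le_smul_of_nonneg_right (le_max_left _ _) hP.posSemidef.nonneg

variable {A} {ρ : ℝ} (hρ : 0 ≤ ρ) {P : Matrix m m ℝ} (hTP : lyapunovMap A P ≤ ρ • P)
include hρ hTP

lemma lyapunovMap_pow_le_smul (k : ℕ) : (lyapunovMap A ^ k) P ≤ ρ ^ k • P := by
  induction k with
  | zero => simp
  | succ k ih =>
    calc (lyapunovMap A ^ (k + 1)) P = lyapunovMap A ((lyapunovMap A ^ k) P) := by
          rw [pow_succ', Module.End.mul_apply]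
      _ ≤ lyapunovMap A (ρ ^ k • P) := lyapunovMap_mono A ih
      _ = ρ ^ k • lyapunovMap A P := map_smul _ _ _
      _ ≤ ρ ^ k • ρ • P := smul_le_smul_of_nonneg_left hTP (pow_nonneg hρ k)
      _ = ρ ^ (k + 1) • P := by rw [smul_smul, pow_succ]

lemma lyapunovMap_pow_le_smul_of_le {X : Matrix m m ℝ} {c : ℝ} (hc : 0 ≤ c) (hX : X ≤ c • P)
    (k : ℕ) : (lyapunovMap A ^ k) X ≤ (c * ρ ^ k) • P :=
  calc (lyapunovMap A ^ k) X ≤ (lyapunovMap A ^ k) (c • P) := lyapunovMap_pow_mono A k hX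
    _ = c • (lyapunovMap A ^ k) P := map_smul _ _ _
    _ ≤ c • ρ ^ k • P := smul_le_smul_of_nonneg_left (lyapunovMap_pow_le_smul hρ hTP k) hc
    _ = (c * ρ ^ k) • P := smul_smul _ _ _

end lyapunovMap

section BilinDominated

lemma dotProduct_mulVec_le_of_le {X Y : Matrix m m ℝ} (h : X ≤ Y) (u : m → ℝ) :
    u ⬝ᵥ X *ᵥ u ≤ u ⬝ᵥ Y *ᵥ u := by
  have := (Matrix.le_iff.mp h).dotProduct_mulVec_nonneg u
  rw [star_trivial, sub_mulVec, dotProduct_sub] at this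
  linarith

lemma BilinDominated.mono {M X Y : Matrix m m ℝ} (h : BilinDominated M X) (hXY : X ≤ Y) :
    BilinDominated M Y := fun u v =>
  (h u v).trans (add_le_add (dotProduct_mulVec_le_of_le hXY u) (dotProduct_mulVec_le_of_le hXY v))

lemma bilinDominated_one_add_transpose_mul_self [DecidableEq m] (M : Matrix m m ℝ) :
    BilinDominated M (1 + Mᵀ * M) := by
  intro u v
  have hsq (x : m → ℝ) : 0 ≤ x ⬝ᵥ x := by simpa using dotProduct_self_star_nonneg x
  have hquad (x : m → ℝ) : x ⬝ᵥ (1 + Mᵀ * M) *ᵥ x = x ⬝ᵥ x + (M *ᵥ x) ⬝ᵥ (M *ᵥ x) := by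
    rw [add_mulVec, one_mulVec, dotProduct_add, ← mulVec_mulVec, dotProduct_mulVec,
      vecMul_transpose]
  have hAMGM := hsq (u - M *ᵥ v)
  simp only [sub_dotProduct, dotProduct_sub, dotProduct_comm (M *ᵥ v) u] at hAMGM
  rw [hquad, hquad]
  linarith [hsq (M *ᵥ u), hsq v]

variable [Fintype Q] (A : Q → Matrix m m ℝ)

lemma dotProduct_lyapunovMap_mulVec (Y : Matrix m m ℝ) (x y : m → ℝ) :
    x ⬝ᵥ lyapunovMap A Y *ᵥ y = ∑ q, (A q *ᵥ x) ⬝ᵥ Y *ᵥ (A q *ᵥ y) := by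
  simp [lyapunovMap_apply, sum_mulVec, dotProduct_sum, ← mulVec_mulVec, dotProduct_mulVec,
    vecMul_transpose]

lemma bilinDominated_lyapunovMap {M X : Matrix m m ℝ} (h : BilinDominated M X) :
    BilinDominated (lyapunovMap A M) (lyapunovMap A X) := by
  intro u v
  simp only [dotProduct_lyapunovMap_mulVec, Finset.mul_sum, ← Finset.sum_add_distrib]
  exact Finset.sum_le_sum fun q _ => h _ _

lemma bilinDominated_lyapunovMap_pow {M X : Matrix m m ℝ} (h : BilinDominated M X) (k : ℕ) :
    BilinDominated ((lyapunovMap A ^ k) M) ((lyapunovMap A ^ k) X) := by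
  induction k with
  | zero => simpa using h
  | succ k ih =>
    simpa only [pow_succ', Module.End.mul_apply] using bilinDominated_lyapunovMap A ih

lemma eq_zero_of_bilinDominated_smul {M P : Matrix m m ℝ} {ε : ℕ → ℝ}
    (hε : Filter.Tendsto ε Filter.atTop (nhds 0)) (h : ∀ k, BilinDominated M (ε k • P)) :
    M = 0 := by
  classical
  have hle (u v : m → ℝ) : u ⬝ᵥ M *ᵥ v ≤ 0 := by
    have hlim : Filter.Tendsto (fun k => ε k * (u ⬝ᵥ P *ᵥ u + v ⬝ᵥ P *ᵥ v)) Filter.atTop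
        (nhds 0) := by
      simpa using hε.mul_const (u ⬝ᵥ P *ᵥ u + v ⬝ᵥ P *ᵥ v)
    have := ge_of_tendsto' hlim fun k => by simpa [smul_mulVec, mul_add] using h k u v
    linarith
  ext i j
  have h₁ := hle (Pi.single i 1) (Pi.single j 1)
  have h₂ := hle (-Pi.single i 1) (Pi.single j 1)
  simp only [mulVec_single, MulOpposite.op_one, one_smul, neg_dotProduct, single_dotProduct,
    col_apply, one_mul] at h₁ h₂
  simp only [Matrix.zero_apply]
  linarith

lemma eq_zero_of_lyapunovMap_eq_self [DecidableEq m] {ρ : ℝ} (hρ₀ : 0 ≤ ρ) (hρ₁ : ρ < 1)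
    {P : Matrix m m ℝ} (hP : P.PosDef) (hTP : lyapunovMap A P ≤ ρ • P) {D : Matrix m m ℝ}
    (hD : lyapunovMap A D = D) : D = 0 := by
  have hHerm : (1 + Dᵀ * D).IsHermitian := by
    simpa using isHermitian_one.add (isHermitian_conjTranspose_mul_self D)
  obtain ⟨c, hc, hcP⟩ := hHerm.exists_le_smul_of_posDef hP
  refine eq_zero_of_bilinDominated_smul (P := P) (ε := fun k => c * ρ ^ k)
    (by simpa using (tendsto_pow_atTop_nhds_zero_of_lt_one hρ₀ hρ₁).const_mul c) fun k => ?_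
  have hDk : (lyapunovMap A ^ k) D = D := by
    rw [Module.End.pow_apply]
    exact Function.iterate_fixed hD k
  simpa only [hDk] using (bilinDominated_lyapunovMap_pow A
    (bilinDominated_one_add_transpose_mul_self D) k).mono
      (lyapunovMap_pow_le_smul_of_le hρ₀ hTP hc.le hcP k)

end BilinDominated

section Words

variable {n : ℕ} (A : Q → Matrix (Fin n) (Fin n) ℝ)

def wordConj (X : Matrix (Fin n) (Fin n) ℝ) (w : List Q) : Matrix (Fin n) (Fin n) ℝ :=
  (wordProd A w)ᵀ * X * wordProd A w

lemma foldl_eq_wordProd_mul (w : List Q) (B : Matrix (Fin n) (Fin n) ℝ) :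
    w.foldl (fun M q => A q * M) B = wordProd A w * B := by
  induction w generalizing B with
  | nil => simp [wordProd]
  | cons q w ih => rw [wordProd, List.foldl_cons, List.foldl_cons, ih, ih, mul_one, mul_assoc]

lemma wordProd_cons (q : Q) (w : List Q) : wordProd A (q :: w) = wordProd A w * A q := by
  rw [wordProd, List.foldl_cons, foldl_eq_wordProd_mul, mul_one]

lemma wordConj_cons (X : Matrix (Fin n) (Fin n) ℝ) (q : Q) (w : List Q) :
    wordConj A X (q :: w) = (A q)ᵀ * wordConj A X w * A q := by
  simp only [wordConj, wordProd_cons, transpose_mul, mul_assoc]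

lemma wordConj_posSemidef {X : Matrix (Fin n) (Fin n) ℝ} (hX : X.PosSemidef) (w : List Q) :
    (wordConj A X w).PosSemidef := by
  have := transpose_mul_mul_le_transpose_mul_mul hX.nonneg (wordProd A w)
  rw [mul_zero, zero_mul] at this
  exact this.posSemidef

variable [Fintype Q]

lemma sum_wordConj_ofFn (X : Matrix (Fin n) (Fin n) ℝ) (k : ℕ) :
    ∑ f : Fin k → Q, wordConj A X (List.ofFn f) = (lyapunovMap A ^ k) X := by
  induction k with
  | zero => simp [wordConj, wordProd]
  | succ k ih =>
    rw [← (Fin.consEquiv fun _ => Q).sum_comp, Fintype.sum_prod_type, pow_succ',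
      Module.End.mul_apply, ← ih, lyapunovMap_apply]
    simp [Fin.consEquiv, wordConj_cons, Finset.mul_sum, Finset.sum_mul]

lemma hasSum_lyapunovMap_pow_of_hasSum_wordConj {X S : Matrix (Fin n) (Fin n) ℝ}
    (h : HasSum (wordConj A X) S) : HasSum (fun k => (lyapunovMap A ^ k) X) S :=
  (List.equivSigmaTuple.symm.hasSum_iff.mpr h).sigma fun k => by
    simpa [sum_wordConj_ofFn] using hasSum_fintype fun f : Fin k → Q => wordConj A X (List.ofFn f)

lemma summable_wordConj {ρ : ℝ} (hρ₀ : 0 ≤ ρ) (hρ₁ : ρ < 1) {P : Matrix (Fin n) (Fin n) ℝ}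
    (hP : P.PosDef) (hTP : lyapunovMap A P ≤ ρ • P) {G : Matrix (Fin n) (Fin n) ℝ}
    (hG : G.PosSemidef) : Summable (wordConj A G) := by
  obtain ⟨c, hc, hGc⟩ := hG.isHermitian.exists_le_smul_of_posDef hP
  have htrace_nonneg (w : List Q) : 0 ≤ (wordConj A G w).trace :=
    (wordConj_posSemidef A hG w).trace_nonneg
  have htrace_le (k : ℕ) : ((lyapunovMap A ^ k) G).trace ≤ c * P.trace * ρ ^ k := by
    have := (Matrix.le_iff.mp (lyapunovMap_pow_le_smul_of_le hρ₀ hTP hc.le hGc k)).trace_nonneg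
    rw [trace_sub, trace_smul, smul_eq_mul] at this
    linarith
  refine summable_of_posSemidef_of_summable_trace (wordConj_posSemidef A hG) ?_
  rw [← List.equivSigmaTuple.symm.summable_iff]
  refine (summable_sigma_of_nonneg fun _ => htrace_nonneg _).mpr ⟨fun _ => .of_finite,
    .of_nonneg_of_le (fun _ => tsum_nonneg fun _ => htrace_nonneg _) (fun k => ?_)
      ((summable_geometric_of_lt_one hρ₀ hρ₁).mul_left (c * P.trace))⟩
  simpa [tsum_fintype, ← trace_sum, sum_wordConj_ofFn] using htrace_le k

end Words

end

/-- if there is a symmetric positive definite `P` with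
`P − Σ_q A_qᵀPA_q ≻ 0`, then for every positive semidefinite `G` the equation
`P' = Σ_q A_qᵀP'A_q + G` has a unique solution; this solution is positive
semidefinite, equals `Σ_{w ∈ Q*} A_wᵀ G A_w`, and is positive definite whenever
`G` is. -/
theorem stmt10 {n : ℕ} {Q : Type*} [Fintype Q]
    (A : Q → Matrix (Fin n) (Fin n) ℝ)
    (P : Matrix (Fin n) (Fin n) ℝ) (hP : P.PosDef)
    (hstab : (P - ∑ q : Q, (A q)ᵀ * P * A q).PosDef)
    (G : Matrix (Fin n) (Fin n) ℝ) (hG : G.PosSemidef) :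
    (∃! P' : Matrix (Fin n) (Fin n) ℝ, P' = (∑ q : Q, (A q)ᵀ * P' * A q) + G) ∧
    (∀ P' : Matrix (Fin n) (Fin n) ℝ,
      P' = (∑ q : Q, (A q)ᵀ * P' * A q) + G →
        P'.PosSemidef ∧
        Summable (fun w : List Q => (wordProd A w)ᵀ * G * wordProd A w) ∧
        P' = ∑' w : List Q, (wordProd A w)ᵀ * G * wordProd A w ∧
        (G.PosDef → P'.PosDef)) := by
  obtain ⟨ρ, hρ₀, hρ₁, hTP⟩ := exists_lyapunovMap_le_smul A hP hstab
  have hsum : HasSum (wordConj A G) (∑' w, wordConj A G w) :=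
    (summable_wordConj A hρ₀ hρ₁ hP hTP hG).hasSum
  set S := ∑' w, wordConj A G w
  have hfix : lyapunovMap A S + G = S :=
    (lyapunovMap A).apply_add_eq_of_hasSum_pow (LinearMap.continuous_of_finiteDimensional _)
      (hasSum_lyapunovMap_pow_of_hasSum_wordConj A hsum)
  have hS : S.PosSemidef := .of_hasSum (wordConj_posSemidef A hG) hsum
  have huniq (P' : Matrix (Fin n) (Fin n) ℝ) (hP' : P' = lyapunovMap A P' + G) : P' = S := by
    refine sub_eq_zero.mp (eq_zero_of_lyapunovMap_eq_self A hρ₀ hρ₁ hP hTP ?_)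
    calc lyapunovMap A (P' - S) = (lyapunovMap A P' + G) - (lyapunovMap A S + G) := by
          rw [map_sub, add_sub_add_right_eq_sub]
      _ = P' - S := by rw [← hP', hfix]
  refine ⟨⟨S, hfix.symm, huniq⟩, fun P' hP' => ?_⟩
  obtain rfl := huniq P' hP'
  refine ⟨hS, hsum.summable, rfl, fun hGpd => ?_⟩
  rw [← hfix]
  exact PosDef.posSemidef_add (lyapunovMap_posSemidef A hS) hGpd
end

section
/- Let Q be a finite set with matrices A_q (n×n), B_q (n×m), C_q (p×n), and suppose the nice grammians exist: 𝒫 = Σ_{q∈Q} A_q𝒫A_qᵀ + Σ_{q∈Q} B_qB_qᵀ and 𝒬 = Σ_{q∈Q} A_qᵀ𝒬A_q + Σ_{q∈Q} C_qᵀC_q, given (under strong stability) by 𝒫 = Σ_{v∈Q*} A_v B̃B̃ᵀ A_vᵀ and 𝒬 = Σ_{w∈Q*} A_wᵀ C̃ᵀC̃ A_w, where B̃ = [B_1,…,B_D] and C̃ = [C_1;…;C_D]. Then tr(𝒫𝒬) = Σ_{v,w ∈ Q*} ‖C̃ A_w A_v B̃‖_F², the sum of squared Frobenius norms of all blocks of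 the Hankel matrix. -/
open Matrix

/-!
Both grammians are convergent series of real matrices, hence entrywise absolutely
convergent, so the trace of their
product expands, by the Cauchy product, into the double series over pairs of words of
`tr(A_v B̃ B̃ᵀ A_vᵀ A_wᵀ C̃ᵀ C̃ A_w)`, and each of these traces is, by cyclicity, the
squared Frobenius norm of the Hankel block `C̃ A_w A_v B̃`.
-/

namespace Matrix

variable {ι κ l m o R : Type*}

theorem mul_transpose_eq_sum_of_blocks [Fintype ι] [Fintype m] [CommSemiring R]
    (X : Matrix l (ι × m) R) (B : ι → Matrix l m R) (hX : ∀ i qj, X i qj = B qj.1 i qj.2) :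
    X * Xᵀ = ∑ q, B q * (B q)ᵀ := by
  ext i j
  simp only [mul_apply, transpose_apply, sum_apply, hX, Fintype.sum_prod_type]

theorem transpose_mul_eq_sum_of_blocks [Fintype ι] [Fintype m] [CommSemiring R]
    (X : Matrix (ι × m) l R) (C : ι → Matrix m l R) (hX : ∀ qi j, X qi j = C qi.1 qi.2 j) :
    Xᵀ * X = ∑ q, (C q)ᵀ * C q := by
  simpa only [transpose_transpose] using
    mul_transpose_eq_sum_of_blocks Xᵀ (fun q => (C q)ᵀ) fun i qj => hX qj i

theorem sum_sq_entries_eq_trace_transpose_mul [Fintype l] [Fintype m] [CommSemiring R]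
    (K : Matrix l m R) : ∑ i, ∑ j, K i j ^ 2 = (Kᵀ * K).trace := by
  simp only [trace, diag, mul_apply, transpose_apply, sq]
  exact Finset.sum_comm

theorem trace_gram_mul_gram [Fintype l] [Fintype m] [Fintype o] [CommSemiring R]
    (C : Matrix o l R) (W V : Matrix l l R) (B : Matrix l m R) :
    ((C * W * V * B)ᵀ * (C * W * V * B)).trace
      = (V * (B * Bᵀ) * Vᵀ * (Wᵀ * (Cᵀ * C) * W)).trace := by
  simp only [transpose_mul, Matrix.mul_assoc]
  rw [trace_mul_comm V]
  simp only [Matrix.mul_assoc]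
  rw [trace_mul_comm B]
  simp only [Matrix.mul_assoc]

/-- If the series diverged, its sum would be the junk value `0`, and the fixed-point
equation would force `S = 0`, making every term vanish. -/
theorem summable_of_eq_tsum_of_fixedPoint [Fintype l] [Fintype ι] [Semiring R]
    [TopologicalSpace R] (L L' : ι → Matrix l l R) (U V : κ → Matrix l l R)
    (S G : Matrix l l R) (hG : G = ∑' v, U v * S * V v)
    (hfix : G = ∑ q, L q * G * L' q + S) : Summable fun v => U v * S * V v := by
  by_contra h
  rw [tsum_eq_zero_of_not_summable h] at hG
  have hS : S = 0 := by simpa [hG] using hfix.symm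
  simp [hS] at h

theorem hasSum_apply_tsum [AddCommMonoid R] [TopologicalSpace R] {F : ι → Matrix l m R}
    (hF : Summable F) (i : l) (j : m) :
    HasSum (fun v => F v i j) ((∑' v, F v) i j) :=
  Pi.hasSum.mp (Pi.hasSum.mp hF.hasSum i) j

theorem hasSum_trace_mul_of_summable [Fintype l] {M : ι → Matrix l l ℝ}
    {N : κ → Matrix l l ℝ} (hM : Summable M) (hN : Summable N) :
    HasSum (fun vw : ι × κ => (M vw.1 * N vw.2).trace) ((∑' v, M v) * ∑' w, N w).trace := by
  simp only [trace, diag, mul_apply]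
  refine hasSum_sum fun i _ => hasSum_sum fun j _ =>
    (hasSum_apply_tsum hM i j).mul (hasSum_apply_tsum hN j i) ?_
  exact summable_mul_of_summable_norm (f := fun v => M v i j) (g := fun w => N w j i)
    (hasSum_apply_tsum hM i j).summable.norm (hasSum_apply_tsum hN j i).summable.norm

end Matrix

theorem stmt12_general {n m p : ℕ} {Q : Type*} [Fintype Q]
    (A : Q → Matrix (Fin n) (Fin n) ℝ)
    (B : Q → Matrix (Fin n) (Fin m) ℝ)
    (C : Q → Matrix (Fin p) (Fin n) ℝ)
    (Bt : Matrix (Fin n) (Q × Fin m) ℝ)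
    (hBt : ∀ i qj, Bt i qj = B qj.1 i qj.2)
    (Ct : Matrix (Q × Fin p) (Fin n) ℝ)
    (hCt : ∀ qi j, Ct qi j = C qi.1 qi.2 j)
    (Pg Qg : Matrix (Fin n) (Fin n) ℝ)
    (hPg : Pg = ∑' v : List Q, wordProd A v * (Bt * Btᵀ) * (wordProd A v)ᵀ)
    (hQg : Qg = ∑' w : List Q, (wordProd A w)ᵀ * (Ctᵀ * Ct) * wordProd A w)
    (hPfix : Pg = (∑ q : Q, A q * Pg * (A q)ᵀ) + ∑ q : Q, B q * (B q)ᵀ)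
    (hQfix : Qg = (∑ q : Q, (A q)ᵀ * Qg * A q) + ∑ q : Q, (C q)ᵀ * C q) :
    Summable (fun vw : List Q × List Q =>
      ∑ i, ∑ j, (Ct * wordProd A vw.2 * wordProd A vw.1 * Bt) i j ^ 2) ∧
    (Pg * Qg).trace = ∑' vw : List Q × List Q,
      ∑ i, ∑ j, (Ct * wordProd A vw.2 * wordProd A vw.1 * Bt) i j ^ 2 := by
  rw [← mul_transpose_eq_sum_of_blocks Bt B hBt] at hPfix
  rw [← transpose_mul_eq_sum_of_blocks Ct C hCt] at hQfix
  have hPsum := summable_of_eq_tsum_of_fixedPoint _ _ _ _ _ _ hPg hPfix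
  have hQsum := summable_of_eq_tsum_of_fixedPoint _ _ _ _ _ _ hQg hQfix
  have hsum := hasSum_trace_mul_of_summable hPsum hQsum
  simp only [← hPg, ← hQg, ← trace_gram_mul_gram Ct, ← sum_sq_entries_eq_trace_transpose_mul]
    at hsum
  exact ⟨hsum.summable, hsum.tsum_eq.symm⟩

/-- with `B̃ = [B_1,…,B_D]`, `C̃ = [C_1;…;C_D]`, under strong
stability, if `Pg` and `Qg` are the nice controllability and observability
grammians (fixed points given by the convergent series), then
`tr(Pg·Qg) = Σ_{v,w∈Q*} ‖C̃ A_w A_v B̃‖_F²`. -/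
theorem stmt12 {n m p : ℕ} {Q : Type*} [Fintype Q]
    (A : Q → Matrix (Fin n) (Fin n) ℝ)
    (B : Q → Matrix (Fin n) (Fin m) ℝ)
    (C : Q → Matrix (Fin p) (Fin n) ℝ)
    -- strong stability: the series defining the grammians converge
    (P : Matrix (Fin n) (Fin n) ℝ) (hP : P.PosDef)
    (hstab : (P - ∑ q : Q, (A q)ᵀ * P * A q).PosDef)
    (Bt : Matrix (Fin n) (Q × Fin m) ℝ)
    (hBt : ∀ i qj, Bt i qj = B qj.1 i qj.2)
    (Ct : Matrix (Q × Fin p) (Fin n) ℝ)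
    (hCt : ∀ qi j, Ct qi j = C qi.1 qi.2 j)
    (Pg Qg : Matrix (Fin n) (Fin n) ℝ)
    (hPg : Pg = ∑' v : List Q, wordProd A v * (Bt * Btᵀ) * (wordProd A v)ᵀ)
    (hQg : Qg = ∑' w : List Q, (wordProd A w)ᵀ * (Ctᵀ * Ct) * wordProd A w)
    (hPfix : Pg = (∑ q : Q, A q * Pg * (A q)ᵀ) + ∑ q : Q, B q * (B q)ᵀ)
    (hQfix : Qg = (∑ q : Q, (A q)ᵀ * Qg * A q) + ∑ q : Q, (C q)ᵀ * C q) :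
    Summable (fun vw : List Q × List Q =>
      ∑ i, ∑ j, (Ct * wordProd A vw.2 * wordProd A vw.1 * Bt) i j ^ 2) ∧
    (Pg * Qg).trace = ∑' vw : List Q × List Q,
      ∑ i, ∑ j, (Ct * wordProd A vw.2 * wordProd A vw.1 * Bt) i j ^ 2 :=
  stmt12_general A B C Bt hBt Ct hCt Pg Qg hPg hQg hPfix hQfix
end

section
/- Let Q be a finite set, with Ā_q partitioned as in balanced truncation: Ā_q = [[Â_q, A_{q,12}], [A_{q,21}, A_{q,22}]] with Â_q of size r×r, C̄_q = [Ĉ_q, C_{q,2}], and Λ = diag(Λ₁, Λ₂) positive definite diagonal, Λ₁ of size r×r. If Ā_qᵀΛĀ_q + C̄_qᵀC̄_q − Λ ≤ 0 for all q ∈ Q, then Â_qᵀΛ₁Â_q + Ĉ_qᵀĈ_q − Λ₁ ≤ 0 for all q ∈ Q. -/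
/-!
Testing the full inequality on vectors `(v, 0)` sees only its upper-left block, which is the
reduced form `Âᵀ Λ₁ Â + Ĉᵀ Ĉ - Λ₁` plus the positive semidefinite term `A₂₁ᵀ Λ₂ A₂₁`;
dropping that term preserves the inequality.
-/

open Matrix

namespace Matrix

variable {l m n o p α : Type*}

theorem sumElim_zero_dotProduct_mulVec_sumElim_zero [Fintype m] [Fintype n]
    [NonUnitalNonAssocSemiring α] (M : Matrix (m ⊕ n) (m ⊕ n) α) (v : m → α) :
    Sum.elim v 0 ⬝ᵥ (M *ᵥ Sum.elim v 0) = v ⬝ᵥ (M.toBlocks₁₁ *ᵥ v) := by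
  conv_lhs => rw [← fromBlocks_toBlocks M]
  simp [fromBlocks_mulVec, sumElim_dotProduct_sumElim]

theorem toBlocks₁₁_add [Add α] (M N : Matrix (n ⊕ o) (l ⊕ m) α) :
    (M + N).toBlocks₁₁ = M.toBlocks₁₁ + N.toBlocks₁₁ :=
  rfl

theorem toBlocks₁₁_sub [Sub α] (M N : Matrix (n ⊕ o) (l ⊕ m) α) :
    (M - N).toBlocks₁₁ = M.toBlocks₁₁ - N.toBlocks₁₁ :=
  rfl

theorem toBlocks₁₁_transpose_mul_fromBlocks_diag_mul [Fintype m] [Fintype n] [Semiring α]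
    (A : Matrix m m α) (B : Matrix m n α) (C : Matrix n m α) (D : Matrix n n α)
    (L₁ : Matrix m m α) (L₂ : Matrix n n α) :
    ((fromBlocks A B C D)ᵀ * fromBlocks L₁ 0 0 L₂ * fromBlocks A B C D).toBlocks₁₁ =
      Aᵀ * L₁ * A + Cᵀ * L₂ * C := by
  simp [fromBlocks_transpose, fromBlocks_multiply]

theorem toBlocks₁₁_transpose_fromCols_mul_fromCols [Fintype m] [Fintype n] [Fintype p]
    [Semiring α] (C₁ : Matrix p m α) (C₂ : Matrix p n α) :
    ((fromCols C₁ C₂)ᵀ * fromCols C₁ C₂).toBlocks₁₁ = C₁ᵀ * C₁ := by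
  rw [transpose_fromCols, fromRows_mul_fromCols, toBlocks_fromBlocks₁₁]

end Matrix

theorem stmt14_general {r s p : ℕ} {Q : Type*}
    (Ahat : Q → Matrix (Fin r) (Fin r) ℝ)
    (A12 : Q → Matrix (Fin r) (Fin s) ℝ)
    (A21 : Q → Matrix (Fin s) (Fin r) ℝ)
    (A22 : Q → Matrix (Fin s) (Fin s) ℝ)
    (Chat : Q → Matrix (Fin p) (Fin r) ℝ)
    (C2 : Q → Matrix (Fin p) (Fin s) ℝ)
    (d₁ : Fin r → ℝ) (d₂ : Fin s → ℝ)
    (hd₂ : ∀ i, 0 < d₂ i)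
    (Abar : Q → Matrix (Fin r ⊕ Fin s) (Fin r ⊕ Fin s) ℝ)
    (hAbar : ∀ q, Abar q = Matrix.fromBlocks (Ahat q) (A12 q) (A21 q) (A22 q))
    (Cbar : Q → Matrix (Fin p) (Fin r ⊕ Fin s) ℝ)
    (hCbar : ∀ q, Cbar q = Matrix.fromCols (Chat q) (C2 q))
    (Λ : Matrix (Fin r ⊕ Fin s) (Fin r ⊕ Fin s) ℝ)
    (hΛ : Λ = Matrix.fromBlocks (Matrix.diagonal d₁) 0 0 (Matrix.diagonal d₂))
    (h : ∀ q : Q, ∀ v : Fin r ⊕ Fin s → ℝ,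
      v ⬝ᵥ (((Abar q)ᵀ * Λ * Abar q + (Cbar q)ᵀ * Cbar q - Λ) *ᵥ v) ≤ 0) :
    ∀ q : Q, ∀ v : Fin r → ℝ,
      v ⬝ᵥ (((Ahat q)ᵀ * Matrix.diagonal d₁ * Ahat q
        + (Chat q)ᵀ * Chat q - Matrix.diagonal d₁) *ᵥ v) ≤ 0 := by
  intro q v
  have hfull := h q (Sum.elim v 0)
  rw [sumElim_zero_dotProduct_mulVec_sumElim_zero, toBlocks₁₁_sub, toBlocks₁₁_add, hAbar, hCbar,
    hΛ, toBlocks₁₁_transpose_mul_fromBlocks_diag_mul, toBlocks₁₁_transpose_fromCols_mul_fromCols,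
    toBlocks_fromBlocks₁₁] at hfull
  have hA21 : 0 ≤ v ⬝ᵥ (((A21 q)ᵀ * diagonal d₂ * A21 q) *ᵥ v) :=
    ((PosSemidef.diagonal fun i => (hd₂ i).le).conjTranspose_mul_mul_same
      (A21 q)).dotProduct_mulVec_nonneg v
  have hsplit : (Ahat q)ᵀ * diagonal d₁ * Ahat q + (A21 q)ᵀ * diagonal d₂ * A21 q
      + (Chat q)ᵀ * Chat q - diagonal d₁
      = ((Ahat q)ᵀ * diagonal d₁ * Ahat q + (Chat q)ᵀ * Chat q - diagonal d₁)
        + (A21 q)ᵀ * diagonal d₂ * A21 q := by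
    abel
  rw [hsplit, add_mulVec, dotProduct_add] at hfull
  linarith

/-- discrete-time balanced truncation preserves the
observability grammian inequality: with `Ā_q = [[Â_q, A₁₂], [A₂₁, A₂₂]]`,
`C̄_q = [Ĉ_q, C₂]`, `Λ = diag(Λ₁, Λ₂)` diagonal positive definite, if
`Ā_qᵀΛĀ_q + C̄_qᵀC̄_q − Λ ≤ 0` for all `q`, then
`Â_qᵀΛ₁Â_q + Ĉ_qᵀĈ_q − Λ₁ ≤ 0` for all `q`. -/
theorem stmt14 {r s p : ℕ} {Q : Type*} [Fintype Q]
    (Ahat : Q → Matrix (Fin r) (Fin r) ℝ)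
    (A12 : Q → Matrix (Fin r) (Fin s) ℝ)
    (A21 : Q → Matrix (Fin s) (Fin r) ℝ)
    (A22 : Q → Matrix (Fin s) (Fin s) ℝ)
    (Chat : Q → Matrix (Fin p) (Fin r) ℝ)
    (C2 : Q → Matrix (Fin p) (Fin s) ℝ)
    (d₁ : Fin r → ℝ) (d₂ : Fin s → ℝ)
    (hd₁ : ∀ i, 0 < d₁ i) (hd₂ : ∀ i, 0 < d₂ i)
    (Abar : Q → Matrix (Fin r ⊕ Fin s) (Fin r ⊕ Fin s) ℝ)
    (hAbar : ∀ q, Abar q = Matrix.fromBlocks (Ahat q) (A12 q) (A21 q) (A22 q))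
    (Cbar : Q → Matrix (Fin p) (Fin r ⊕ Fin s) ℝ)
    (hCbar : ∀ q, Cbar q = Matrix.fromCols (Chat q) (C2 q))
    (Λ : Matrix (Fin r ⊕ Fin s) (Fin r ⊕ Fin s) ℝ)
    (hΛ : Λ = Matrix.fromBlocks (Matrix.diagonal d₁) 0 0 (Matrix.diagonal d₂))
    (h : ∀ q : Q, ∀ v : Fin r ⊕ Fin s → ℝ,
      v ⬝ᵥ (((Abar q)ᵀ * Λ * Abar q + (Cbar q)ᵀ * Cbar q - Λ) *ᵥ v) ≤ 0) :
    ∀ q : Q, ∀ v : Fin r → ℝ,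
      v ⬝ᵥ (((Ahat q)ᵀ * Matrix.diagonal d₁ * Ahat q
        + (Chat q)ᵀ * Chat q - Matrix.diagonal d₁) *ᵥ v) ≤ 0 :=
  stmt14_general Ahat A12 A21 A22 Chat C2 d₁ d₂ hd₂ Abar hAbar Cbar hCbar Λ hΛ h
end

section
/- Duality of grammians, continuous time: let Q be finite with A_q (n×n), B_q (n×m), C_q (p×n), and P symmetric positive definite. Then P satisfies A_qᵀP + PA_q + C_qᵀC_q ≤ 0 for all q ∈ Q if and only if P⁻¹ satisfies A_qP⁻¹ + P⁻¹A_qᵀ + P⁻¹C_qᵀC_qP⁻¹ ≤ 0 for all q ∈ Q, i.e. P⁻¹ is a controllability grammian of the dual system (A_qᵀ, C_qᵀ, B_qᵀ). -/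
open Matrix

lemma quad_congr {n : ℕ} (M S : Matrix (Fin n) (Fin n) ℝ) (hS : Sᵀ = S) (v : Fin n → ℝ) :
    v ⬝ᵥ ((S * M * S) *ᵥ v) = (S *ᵥ v) ⬝ᵥ (M *ᵥ (S *ᵥ v)) := by
  rw [← mulVec_mulVec, ← mulVec_mulVec, dotProduct_mulVec, ← mulVec_transpose, hS]

/-- duality of grammians, continuous time: for `P` symmetric
positive definite, `A_qᵀP + PA_q + C_qᵀC_q ≤ 0` for all `q` iff
`A_qP⁻¹ + P⁻¹A_qᵀ + P⁻¹C_qᵀC_qP⁻¹ ≤ 0` for all `q`. -/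
theorem stmt16 {n m p : ℕ} {Q : Type*} [Fintype Q]
    (A : Q → Matrix (Fin n) (Fin n) ℝ)
    (B : Q → Matrix (Fin n) (Fin m) ℝ)
    (C : Q → Matrix (Fin p) (Fin n) ℝ)
    (P : Matrix (Fin n) (Fin n) ℝ) (hP : P.PosDef) :
    (∀ q : Q, ∀ v : Fin n → ℝ,
      v ⬝ᵥ (((A q)ᵀ * P + P * A q + (C q)ᵀ * C q) *ᵥ v) ≤ 0) ↔
    (∀ q : Q, ∀ v : Fin n → ℝ,
      v ⬝ᵥ ((A q * P⁻¹ + P⁻¹ * (A q)ᵀ + P⁻¹ * (C q)ᵀ * C q * P⁻¹) *ᵥ v) ≤ 0) := by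
  have hPd : IsUnit P.det := isUnit_iff_ne_zero.mpr hP.det_pos.ne'
  have hPs : Pᵀ = P := by simpa using hP.1.eq
  have hPis : (P⁻¹)ᵀ = P⁻¹ := by rw [transpose_nonsing_inv, hPs]
  have h1 : P * P⁻¹ = 1 := mul_nonsing_inv P hPd
  have h2 : P⁻¹ * P = 1 := nonsing_inv_mul P hPd
  constructor
  · intro h q v
    have key : A q * P⁻¹ + P⁻¹ * (A q)ᵀ + P⁻¹ * (C q)ᵀ * C q * P⁻¹
        = P⁻¹ * (((A q)ᵀ * P + P * A q + (C q)ᵀ * C q)) * P⁻¹ := by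
      rw [Matrix.mul_add, Matrix.mul_add, Matrix.add_mul, Matrix.add_mul]
      rw [show P⁻¹ * ((A q)ᵀ * P) * P⁻¹ = P⁻¹ * (A q)ᵀ * (P * P⁻¹) by
        simp [Matrix.mul_assoc], h1]
      rw [show P⁻¹ * (P * A q) * P⁻¹ = (P⁻¹ * P) * (A q * P⁻¹) by
        simp [Matrix.mul_assoc], h2]
      simp [Matrix.mul_assoc]
      abel
    rw [key, quad_congr _ _ hPis]
    exact h q _
  · intro h q v
    have key : (A q)ᵀ * P + P * A q + (C q)ᵀ * C q
        = P * (A q * P⁻¹ + P⁻¹ * (A q)ᵀ + P⁻¹ * (C q)ᵀ * C q * P⁻¹) * P := by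
      rw [Matrix.mul_add, Matrix.mul_add, Matrix.add_mul, Matrix.add_mul]
      rw [show P * (A q * P⁻¹) * P = P * A q * (P⁻¹ * P) by simp [Matrix.mul_assoc], h2]
      rw [show P * (P⁻¹ * (A q)ᵀ) * P = (P * P⁻¹) * ((A q)ᵀ * P) by simp [Matrix.mul_assoc], h1]
      rw [show P * (P⁻¹ * (C q)ᵀ * C q * P⁻¹) * P
          = (P * P⁻¹) * ((C q)ᵀ * C q) * (P⁻¹ * P) by simp [Matrix.mul_assoc], h1, h2]
      simp [Matrix.mul_assoc]
      abel
    rw [key, quad_congr _ _ hPs]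
    exact h q _
end

section
/- Discrete-time L2-gain certificate: let Q be finite with A_q, B_q, C_q real matrices, γ > 0, and suppose P is symmetric positive definite such that for all q ∈ Q the block matrix [[A_qᵀPA_q + C_qᵀC_q − P, A_qᵀPB_q], [B_qᵀPA_q, B_qᵀPB_q − γ²I]] is negative semidefinite. Then for every input u : ℕ → ℝᵐ and switching sequence q : ℕ → Q, the output y of x(t+1) = A_{q(t)}x(t) + B_{q(t)}u(t), x(0) = 0, y(t) = C_{q(t)}x(t) satisfies Σ_{t=0}^{T−1} ‖y(t)‖₂² ≤ γ² Σ_{t=0}^{T−1} ‖u(t)‖₂² for all T ∈ ℕ. -/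
/-!
The quadratic storage function `V(x) = xᵀPx` is dissipative for the supply rate
`γ²‖u‖² − ‖y‖²`: evaluating the block LMI at the stacked vector `(x(t), u(t))` gives exactly
`V(x(t+1)) − V(x(t)) + ‖y(t)‖² − γ²‖u(t)‖² ≤ 0`. Summing over `t < T` telescopes, and
`V(x(0)) = 0 ≤ V(x(T))` leaves the gain bound.
-/

open Matrix

theorem Finset.sum_range_le_sum_range_of_storage {M : Type*} [AddCommGroup M] [PartialOrder M]
    [IsOrderedAddMonoid M] {V f g : ℕ → M} {T : ℕ} (hV₀ : V 0 = 0) (hV_T : 0 ≤ V T)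
    (hstep : ∀ t, V (t + 1) - V t ≤ f t - g t) :
    ∑ t ∈ Finset.range T, g t ≤ ∑ t ∈ Finset.range T, f t := by
  have htele : V T ≤ ∑ t ∈ Finset.range T, f t - ∑ t ∈ Finset.range T, g t := by
    rw [← Finset.sum_sub_distrib, ← sub_zero (V T), ← hV₀, ← Finset.sum_range_sub]
    exact Finset.sum_le_sum fun t _ => hstep t
  exact sub_nonneg.mp (hV_T.trans htele)

namespace Matrix

theorem dotProduct_self_eq_sum_sq {R ι : Type*} [CommSemiring R] [Fintype ι] (v : ι → R) :
    v ⬝ᵥ v = ∑ i, v i ^ 2 := by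
  simp only [dotProduct, sq]

variable {R ι κ ρ : Type*} [CommRing R] [Fintype ι] [Fintype κ] [Fintype ρ] [DecidableEq κ]

def gainLMI (A : Matrix ι ι R) (B : Matrix ι κ R) (C : Matrix ρ ι R) (P : Matrix ι ι R)
    (c : R) : Matrix (ι ⊕ κ) (ι ⊕ κ) R :=
  fromBlocks (Aᵀ * P * A + Cᵀ * C - P) (Aᵀ * P * B) (Bᵀ * P * A) (Bᵀ * P * B - c • 1)

theorem sumElim_dotProduct_gainLMI_mulVec_sumElim (A : Matrix ι ι R)
    (B : Matrix ι κ R) (C : Matrix ρ ι R) (P : Matrix ι ι R) (c : R) (x : ι → R) (u : κ → R) :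
    Sum.elim x u ⬝ᵥ (gainLMI A B C P c *ᵥ Sum.elim x u) =
      (A *ᵥ x + B *ᵥ u) ⬝ᵥ (P *ᵥ (A *ᵥ x + B *ᵥ u)) - x ⬝ᵥ (P *ᵥ x)
        + (C *ᵥ x) ⬝ᵥ (C *ᵥ x) - c * (u ⬝ᵥ u) := by
  simp only [gainLMI, fromBlocks_mulVec, sumElim_dotProduct_sumElim, Sum.elim_comp_inl,
    Sum.elim_comp_inr, add_mulVec, sub_mulVec, mulVec_add, add_vecMul, add_dotProduct,
    dotProduct_add, dotProduct_sub, smul_mulVec, one_mulVec, dotProduct_smul, smul_eq_mul,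
    ← mulVec_mulVec, dotProduct_mulVec, vecMul_transpose]
  ring

end Matrix

theorem stmt17_general {n m p : ℕ} {Q : Type*}
    (A : Q → Matrix (Fin n) (Fin n) ℝ)
    (B : Q → Matrix (Fin n) (Fin m) ℝ)
    (C : Q → Matrix (Fin p) (Fin n) ℝ)
    (γ : ℝ)
    (P : Matrix (Fin n) (Fin n) ℝ) (hP : P.PosDef)
    (hLMI : ∀ q : Q, ∀ v : Fin n ⊕ Fin m → ℝ,
      v ⬝ᵥ ((Matrix.fromBlocks
        ((A q)ᵀ * P * A q + (C q)ᵀ * C q - P) ((A q)ᵀ * P * B q)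
        ((B q)ᵀ * P * A q) ((B q)ᵀ * P * B q - γ ^ 2 • (1 : Matrix (Fin m) (Fin m) ℝ)))
        *ᵥ v) ≤ 0)
    (u : ℕ → Fin m → ℝ) (q : ℕ → Q) (x : ℕ → Fin n → ℝ) (y : ℕ → Fin p → ℝ)
    (hx0 : x 0 = 0)
    (hx : ∀ t : ℕ, x (t + 1) = (A (q t)) *ᵥ (x t) + (B (q t)) *ᵥ (u t))
    (hy : ∀ t : ℕ, y t = (C (q t)) *ᵥ (x t))
    (T : ℕ) :
    ∑ t ∈ Finset.range T, ∑ i, (y t i) ^ 2 ≤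
      γ ^ 2 * ∑ t ∈ Finset.range T, ∑ i, (u t i) ^ 2 := by
  have hdissip (t : ℕ) : x (t + 1) ⬝ᵥ (P *ᵥ x (t + 1)) - x t ⬝ᵥ (P *ᵥ x t) ≤
      γ ^ 2 * ∑ i, u t i ^ 2 - ∑ i, y t i ^ 2 := by
    have h := hLMI (q t) (Sum.elim (x t) (u t))
    rw [← gainLMI, sumElim_dotProduct_gainLMI_mulVec_sumElim, ← hx, ← hy] at h
    simp only [dotProduct_self_eq_sum_sq] at h
    linarith
  rw [Finset.mul_sum]
  exact Finset.sum_range_le_sum_range_of_storage (V := fun t => x t ⬝ᵥ (P *ᵥ x t))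
    (by simp [hx0]) (hP.posSemidef.dotProduct_mulVec_nonneg (x T)) hdissip

/-- discrete-time L2-gain certificate: if `P ≻ 0` is symmetric
and for all `q` the block matrix
`[[A_qᵀPA_q + C_qᵀC_q − P, A_qᵀPB_q], [B_qᵀPA_q, B_qᵀPB_q − γ²I]]` is negative
semidefinite, then along any trajectory `x(t+1) = A_{q(t)}x(t) + B_{q(t)}u(t)`,
`x(0) = 0`, `y(t) = C_{q(t)}x(t)`, one has
`Σ_{t<T} ‖y(t)‖² ≤ γ² Σ_{t<T} ‖u(t)‖²`. -/
theorem stmt17 {n m p : ℕ} {Q : Type*} [Fintype Q]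
    (A : Q → Matrix (Fin n) (Fin n) ℝ)
    (B : Q → Matrix (Fin n) (Fin m) ℝ)
    (C : Q → Matrix (Fin p) (Fin n) ℝ)
    (γ : ℝ) (hγ : 0 < γ)
    (P : Matrix (Fin n) (Fin n) ℝ) (hP : P.PosDef)
    (hLMI : ∀ q : Q, ∀ v : Fin n ⊕ Fin m → ℝ,
      v ⬝ᵥ ((Matrix.fromBlocks
        ((A q)ᵀ * P * A q + (C q)ᵀ * C q - P) ((A q)ᵀ * P * B q)
        ((B q)ᵀ * P * A q) ((B q)ᵀ * P * B q - γ ^ 2 • (1 : Matrix (Fin m) (Fin m) ℝ)))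
        *ᵥ v) ≤ 0)
    (u : ℕ → Fin m → ℝ) (q : ℕ → Q) (x : ℕ → Fin n → ℝ) (y : ℕ → Fin p → ℝ)
    (hx0 : x 0 = 0)
    (hx : ∀ t : ℕ, x (t + 1) = (A (q t)) *ᵥ (x t) + (B (q t)) *ᵥ (u t))
    (hy : ∀ t : ℕ, y t = (C (q t)) *ᵥ (x t))
    (T : ℕ) :
    ∑ t ∈ Finset.range T, ∑ i, (y t i) ^ 2 ≤
      γ ^ 2 * ∑ t ∈ Finset.range T, ∑ i, (u t i) ^ 2 :=
  stmt17_general A B C γ P hP hLMI u q x y hx0 hx hy T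
end

section
/- Hankel-norm bound by largest singular value (discrete time): let 𝒫, 𝒬 be symmetric positive definite n×n matrices with A_q𝒫A_qᵀ + B_qB_qᵀ − 𝒫 ≤ 0 and A_qᵀ𝒬A_q + C_qᵀC_q − 𝒬 ≤ 0 for all q in a finite set Q. Then for every input u supported on {0,…,t−1} with Σ_s ‖u(s)‖² ≤ 1, every switching sequence q, and the trajectory x(s+1) = A_{q(s)}x(s) + B_{q(s)}u(s), x(0)=0, y(s) = C_{q(s)}x(s), one has Σ_{s=t}^{T} ‖y(s)‖₂² ≤ λ_max(𝒫𝒬) for all T ≥ t. -/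
/-!
Along any trajectory the controllability inequality lets `xᵀ𝒫⁻¹x` grow by at most `‖u(s)‖²` per
step, so `x(t)ᵀ𝒫⁻¹x(t) ≤ 1`. Once the input is switched off, the observability inequality makes
`xᵀ𝒬x` drop by at least `‖y(s)‖²` per step, so the output energy after time `t` is at most
`x(t)ᵀ𝒬x(t)`. Finally, with `S = 𝒫^{1/2}`, the matrix `𝒫𝒬 = S(S𝒬)` has the spectrum of the
symmetric `S𝒬S`, which gives `xᵀ𝒬x ≤ λ_max(𝒫𝒬) · xᵀ𝒫⁻¹x`.
-/

open Matrix Finset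

section QuadraticForms

variable {ι κ : Type*} [Fintype ι] [Fintype κ]

theorem Matrix.dotProduct_transpose_mul_mul_mulVec (M : Matrix κ ι ℝ) (N : Matrix κ κ ℝ)
    (v : ι → ℝ) : v ⬝ᵥ (Mᵀ * N * M) *ᵥ v = (M *ᵥ v) ⬝ᵥ N *ᵥ (M *ᵥ v) := by
  rw [← mulVec_mulVec, ← mulVec_mulVec, dotProduct_transpose_mulVec, dotProduct_comm]

theorem Matrix.dotProduct_transpose_mul_mulVec (M : Matrix κ ι ℝ) (v : ι → ℝ) :
    v ⬝ᵥ (Mᵀ * M) *ᵥ v = (M *ᵥ v) ⬝ᵥ (M *ᵥ v) := by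
  rw [← mulVec_mulVec, dotProduct_transpose_mulVec]

theorem Matrix.dotProduct_mulVec_add_le_of_observability {Q : Matrix ι ι ℝ}
    {A : Matrix ι ι ℝ} {C : Matrix κ ι ℝ}
    (hobs : ∀ v, v ⬝ᵥ ((Aᵀ * Q * A + Cᵀ * C - Q) *ᵥ v) ≤ 0) (x : ι → ℝ) :
    (C *ᵥ x) ⬝ᵥ (C *ᵥ x) + (A *ᵥ x) ⬝ᵥ Q *ᵥ (A *ᵥ x) ≤ x ⬝ᵥ Q *ᵥ x := by
  have hx := hobs x
  rw [sub_mulVec, add_mulVec, dotProduct_sub, dotProduct_add,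
    dotProduct_transpose_mul_mul_mulVec, dotProduct_transpose_mul_mulVec] at hx
  linarith

variable [DecidableEq ι]

theorem Matrix.PosDef.two_mul_dotProduct_le_s18 {P : Matrix ι ι ℝ} (hP : P.PosDef) (a b : ι → ℝ) :
    2 * (a ⬝ᵥ b) ≤ a ⬝ᵥ P *ᵥ a + b ⬝ᵥ P⁻¹ *ᵥ b := by
  have hPP : P *ᵥ (P⁻¹ *ᵥ b) = b := by
    rw [mulVec_mulVec, mul_nonsing_inv _ ((isUnit_iff_isUnit_det P).mp hP.isUnit), one_mulVec]
  have hsymm : Pᵀ = P := (isHermitian_iff_isSymm.mp hP.isHermitian).eq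
  have hcross : (P⁻¹ *ᵥ b) ⬝ᵥ P *ᵥ a = a ⬝ᵥ b := by
    rw [← dotProduct_transpose_mulVec, hsymm, hPP]
  have hsq := hP.posSemidef.dotProduct_mulVec_nonneg (a - P⁻¹ *ᵥ b)
  rw [star_trivial, mulVec_sub, hPP, dotProduct_sub, sub_dotProduct, sub_dotProduct, hcross,
    dotProduct_comm (P⁻¹ *ᵥ b) b] at hsq
  linarith

omit [DecidableEq ι] in
theorem two_mul_dotProduct_le_dotProduct_self_add (a b : ι → ℝ) :
    2 * (a ⬝ᵥ b) ≤ a ⬝ᵥ a + b ⬝ᵥ b := by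
  classical
  simpa using PosDef.one.two_mul_dotProduct_le_s18 a b

theorem Matrix.PosDef.dotProduct_inv_mulVec_add_le {P : Matrix ι ι ℝ} (hP : P.PosDef)
    {A : Matrix ι ι ℝ} {B : Matrix ι κ ℝ}
    (hcon : ∀ v, v ⬝ᵥ ((A * P * Aᵀ + B * Bᵀ - P) *ᵥ v) ≤ 0) (x : ι → ℝ) (u : κ → ℝ) :
    (A *ᵥ x + B *ᵥ u) ⬝ᵥ P⁻¹ *ᵥ (A *ᵥ x + B *ᵥ u) ≤ x ⬝ᵥ P⁻¹ *ᵥ x + u ⬝ᵥ u := by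
  -- Young's inequality bounds both halves of `2 zᵀw`, and `hcon w` absorbs the quadratic terms
  -- into `wᵀPw = zᵀw`.
  set z := A *ᵥ x + B *ᵥ u
  set w := P⁻¹ *ᵥ z
  have hPw : P *ᵥ w = z := by
    rw [mulVec_mulVec, mul_nonsing_inv _ ((isUnit_iff_isUnit_det P).mp hP.isUnit), one_mulVec]
  have hz : z ⬝ᵥ w = (Aᵀ *ᵥ w) ⬝ᵥ x + (Bᵀ *ᵥ w) ⬝ᵥ u := by
    rw [dotProduct_comm, dotProduct_add, ← dotProduct_transpose_mulVec,
      ← dotProduct_transpose_mulVec B, dotProduct_comm x, dotProduct_comm u]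
  have hA := hP.two_mul_dotProduct_le_s18 (Aᵀ *ᵥ w) x
  have hB := two_mul_dotProduct_le_dotProduct_self_add (Bᵀ *ᵥ w) u
  have hAPA : w ⬝ᵥ (A * P * Aᵀ) *ᵥ w = (Aᵀ *ᵥ w) ⬝ᵥ P *ᵥ (Aᵀ *ᵥ w) := by
    simpa using dotProduct_transpose_mul_mul_mulVec Aᵀ P w
  have hBB : w ⬝ᵥ (B * Bᵀ) *ᵥ w = (Bᵀ *ᵥ w) ⬝ᵥ (Bᵀ *ᵥ w) := by
    simpa using dotProduct_transpose_mul_mulVec Bᵀ w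
  have hw := hcon w
  rw [sub_mulVec, add_mulVec, dotProduct_sub, dotProduct_add, hAPA, hBB, hPw,
    dotProduct_comm w z] at hw
  linarith

end QuadraticForms

section Spectrum

open scoped MatrixOrder

variable {ι : Type*} [Fintype ι] [DecidableEq ι]

theorem Matrix.spectrum_mul_comm {K : Type*} [Field K] (A B : Matrix ι ι K) :
    spectrum K (A * B) = spectrum K (B * A) := by
  ext μ
  simp only [mem_spectrum_iff_isRoot_charpoly, charpoly_mul_comm]

theorem Matrix.PosSemidef.spectrum_mul_eq {P : Matrix ι ι ℝ} (hP : P.PosSemidef)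
    (Q : Matrix ι ι ℝ) : spectrum ℝ (P * Q) = spectrum ℝ (CFC.sqrt P * Q * CFC.sqrt P) := by
  conv_lhs => rw [← CFC.sqrt_mul_sqrt_self P hP.nonneg, mul_assoc]
  rw [spectrum_mul_comm]

theorem Matrix.PosSemidef.nonneg_of_mem_spectrum_mul {P Q : Matrix ι ι ℝ} (hP : P.PosSemidef)
    (hQ : Q.PosSemidef) {μ : ℝ} (hμ : μ ∈ spectrum ℝ (P * Q)) : 0 ≤ μ := by
  rw [hP.spectrum_mul_eq] at hμ
  refine spectrum_nonneg_of_nonneg ?_ hμ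
  simpa [(CFC.sqrt_nonneg P).isSelfAdjoint.star_eq] using
    star_left_conjugate_nonneg hQ.nonneg (CFC.sqrt P)

theorem Matrix.PosDef.dotProduct_mulVec_le {P Q : Matrix ι ι ℝ} (hP : P.PosDef)
    (hQ : Q.PosSemidef) {lam : ℝ} (hlam : lam ∈ upperBounds (spectrum ℝ (P * Q))) (v : ι → ℝ) :
    v ⬝ᵥ Q *ᵥ v ≤ lam * (v ⬝ᵥ P⁻¹ *ᵥ v) := by
  set S := CFC.sqrt P
  have hSS : S * S = P := CFC.sqrt_mul_sqrt_self P hP.posSemidef.nonneg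
  have hS : Sᵀ = S := by
    rw [← conjTranspose_eq_transpose_of_trivial, ← star_eq_conjTranspose]
    exact (CFC.sqrt_nonneg P).isSelfAdjoint.star_eq
  have hSdet : IsUnit S.det := by
    have : IsUnit (S.det * S.det) := by
      rw [← det_mul, hSS]; exact (isUnit_iff_isUnit_det P).mp hP.isUnit
    exact (IsUnit.mul_iff.mp this).1
  set w := S⁻¹ *ᵥ v
  have hSw : S *ᵥ w = v := by rw [mulVec_mulVec, mul_nonsing_inv _ hSdet, one_mulVec]
  have hQv : v ⬝ᵥ Q *ᵥ v = w ⬝ᵥ (S * Q * S) *ᵥ w := by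
    rw [← hSw, ← dotProduct_transpose_mul_mul_mulVec, hS]
  have hPv : v ⬝ᵥ P⁻¹ *ᵥ v = w ⬝ᵥ w := by
    rw [← dotProduct_transpose_mul_mulVec, transpose_nonsing_inv, hS, ← mul_inv_rev, hSS]
  have hle : S * Q * S ≤ algebraMap ℝ _ lam :=
    le_algebraMap_of_spectrum_le (by rwa [← hP.posSemidef.spectrum_mul_eq])
  rw [hQv, hPv]
  simpa [sub_mulVec, Algebra.algebraMap_eq_smul_one, smul_mulVec, dotProduct_smul] using
    (Matrix.le_iff.mp hle).dotProduct_mulVec_nonneg w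

end Spectrum

section SwitchedSystem

variable {ι κ ν Q : Type*} [Fintype ι] [Fintype κ] [Fintype ν]
  {A : Q → Matrix ι ι ℝ} {q : ℕ → Q} {x : ℕ → ι → ℝ}

theorem dotProduct_inv_mulVec_le_sum_input [DecidableEq ι] {B : Q → Matrix ι κ ℝ}
    {P : Matrix ι ι ℝ} (hP : P.PosDef)
    (hcon : ∀ q v, v ⬝ᵥ ((A q * P * (A q)ᵀ + B q * (B q)ᵀ - P) *ᵥ v) ≤ 0)
    {u : ℕ → κ → ℝ} (hx0 : x 0 = 0) (hx : ∀ s, x (s + 1) = A (q s) *ᵥ x s + B (q s) *ᵥ u s)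
    (s : ℕ) : x s ⬝ᵥ P⁻¹ *ᵥ x s ≤ ∑ r ∈ range s, u r ⬝ᵥ u r := by
  induction s with
  | zero => simp [hx0]
  | succ s ih =>
    rw [hx s, sum_range_succ]
    linarith [hP.dotProduct_inv_mulVec_add_le (hcon (q s)) (x s) (u s)]

theorem sum_output_add_dotProduct_mulVec_le {C : Q → Matrix ν ι ℝ} {R : Matrix ι ι ℝ}
    (hobs : ∀ q v, v ⬝ᵥ (((A q)ᵀ * R * A q + (C q)ᵀ * C q - R) *ᵥ v) ≤ 0)
    {t : ℕ} (hx : ∀ s, t ≤ s → x (s + 1) = A (q s) *ᵥ x s) {T : ℕ} (hT : t ≤ T) :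
    ∑ s ∈ Icc t T, (C (q s) *ᵥ x s) ⬝ᵥ (C (q s) *ᵥ x s) + x (T + 1) ⬝ᵥ R *ᵥ x (T + 1)
      ≤ x t ⬝ᵥ R *ᵥ x t := by
  have hstep : ∀ s, t ≤ s → (C (q s) *ᵥ x s) ⬝ᵥ (C (q s) *ᵥ x s)
      + x (s + 1) ⬝ᵥ R *ᵥ x (s + 1) ≤ x s ⬝ᵥ R *ᵥ x s := fun s hs => by
    rw [hx s hs]
    exact dotProduct_mulVec_add_le_of_observability (hobs (q s)) (x s)
  induction T, hT using Nat.le_induction with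
  | base => simpa using hstep t le_rfl
  | succ T hT ih =>
    rw [sum_Icc_succ_top (by omega)]
    linarith [hstep (T + 1) (by omega)]

end SwitchedSystem

theorem stmt18_general {n m p : ℕ} {Q : Type*}
    (A : Q → Matrix (Fin n) (Fin n) ℝ)
    (B : Q → Matrix (Fin n) (Fin m) ℝ)
    (C : Q → Matrix (Fin p) (Fin n) ℝ)
    (Pg Qg : Matrix (Fin n) (Fin n) ℝ) (hPg : Pg.PosDef) (hQg : Qg.PosDef)
    (hcon : ∀ q : Q, ∀ v : Fin n → ℝ,
      v ⬝ᵥ ((A q * Pg * (A q)ᵀ + B q * (B q)ᵀ - Pg) *ᵥ v) ≤ 0)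
    (hobs : ∀ q : Q, ∀ v : Fin n → ℝ,
      v ⬝ᵥ (((A q)ᵀ * Qg * A q + (C q)ᵀ * C q - Qg) *ᵥ v) ≤ 0)
    (t : ℕ) (u : ℕ → Fin m → ℝ)
    (hsupp : ∀ s : ℕ, t ≤ s → u s = 0)
    (henergy : ∑ s ∈ Finset.range t, ∑ i, (u s i) ^ 2 ≤ 1)
    (q : ℕ → Q) (x : ℕ → Fin n → ℝ) (y : ℕ → Fin p → ℝ)
    (hx0 : x 0 = 0)
    (hx : ∀ s : ℕ, x (s + 1) = (A (q s)) *ᵥ (x s) + (B (q s)) *ᵥ (u s))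
    (hy : ∀ s : ℕ, y s = (C (q s)) *ᵥ (x s))
    (lam : ℝ) (hlam : IsGreatest (spectrum ℝ (Pg * Qg)) lam)
    (T : ℕ) (hT : t ≤ T) :
    ∑ s ∈ Finset.Icc t T, ∑ i, (y s i) ^ 2 ≤ lam := by
  have hlam0 : 0 ≤ lam := hPg.posSemidef.nonneg_of_mem_spectrum_mul hQg.posSemidef hlam.1
  have hxt : x t ⬝ᵥ Pg⁻¹ *ᵥ x t ≤ 1 :=
    (dotProduct_inv_mulVec_le_sum_input hPg hcon hx0 hx t).trans
      (by simpa only [dotProduct, sq] using henergy)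
  have hfree : ∀ s, t ≤ s → x (s + 1) = A (q s) *ᵥ x s := fun s hs => by
    rw [hx s, hsupp s hs, mulVec_zero, add_zero]
  have htail : 0 ≤ x (T + 1) ⬝ᵥ Qg *ᵥ x (T + 1) := by
    simpa using hQg.posSemidef.dotProduct_mulVec_nonneg (x (T + 1))
  calc ∑ s ∈ Icc t T, ∑ i, (y s i) ^ 2
      = ∑ s ∈ Icc t T, (C (q s) *ᵥ x s) ⬝ᵥ (C (q s) *ᵥ x s) := by
        simp only [hy, dotProduct, sq]
    _ ≤ x t ⬝ᵥ Qg *ᵥ x t := by linarith [sum_output_add_dotProduct_mulVec_le hobs hfree hT]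
    _ ≤ lam * (x t ⬝ᵥ Pg⁻¹ *ᵥ x t) := hPg.dotProduct_mulVec_le hQg.posSemidef hlam.2 (x t)
    _ ≤ lam := mul_le_of_le_one_right hlam0 hxt

/-- Hankel-norm bound by largest singular value, discrete time:
if `Pg, Qg ≻ 0` satisfy the controllability and observability grammian
inequalities, then for any input supported on `{0,…,t−1}` with energy at most
`1`, the output of the zero-initial-state trajectory satisfies
`Σ_{s=t}^{T} ‖y(s)‖² ≤ λ_max(Pg·Qg)` for all `T ≥ t`. -/
theorem stmt18 {n m p : ℕ} {Q : Type*} [Fintype Q]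
    (A : Q → Matrix (Fin n) (Fin n) ℝ)
    (B : Q → Matrix (Fin n) (Fin m) ℝ)
    (C : Q → Matrix (Fin p) (Fin n) ℝ)
    (Pg Qg : Matrix (Fin n) (Fin n) ℝ) (hPg : Pg.PosDef) (hQg : Qg.PosDef)
    (hcon : ∀ q : Q, ∀ v : Fin n → ℝ,
      v ⬝ᵥ ((A q * Pg * (A q)ᵀ + B q * (B q)ᵀ - Pg) *ᵥ v) ≤ 0)
    (hobs : ∀ q : Q, ∀ v : Fin n → ℝ,
      v ⬝ᵥ (((A q)ᵀ * Qg * A q + (C q)ᵀ * C q - Qg) *ᵥ v) ≤ 0)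
    (t : ℕ) (u : ℕ → Fin m → ℝ)
    (hsupp : ∀ s : ℕ, t ≤ s → u s = 0)
    (henergy : ∑ s ∈ Finset.range t, ∑ i, (u s i) ^ 2 ≤ 1)
    (q : ℕ → Q) (x : ℕ → Fin n → ℝ) (y : ℕ → Fin p → ℝ)
    (hx0 : x 0 = 0)
    (hx : ∀ s : ℕ, x (s + 1) = (A (q s)) *ᵥ (x s) + (B (q s)) *ᵥ (u s))
    (hy : ∀ s : ℕ, y s = (C (q s)) *ᵥ (x s))
    (lam : ℝ) (hlam : IsGreatest (spectrum ℝ (Pg * Qg)) lam)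
    (T : ℕ) (hT : t ≤ T) :
    ∑ s ∈ Finset.Icc t T, ∑ i, (y s i) ^ 2 ≤ lam :=
  stmt18_general A B C Pg Qg hPg hQg hcon hobs t u hsupp henergy q x y hx0 hx hy lam hlam T hT
end
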